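/- arXiv:2410.10884 — 6 statements merged into one kernel-verified Lean document; each statement's English description precedes it below -/
import Mathlib

section
/- For vectors x, y in ℝ² both nonzero with x+y nonzero, if F(x,y) = ⟨x,y⟩/(|x|²·|y|²), then F(x,y) - F(x+y,y) - F(x,x+y) = -2·det(x,y)²/(|x|²·|y|²·|x+y|²), where det(x,y) = x₁y₂ - x₂y₁ and ⟨x,y⟩ is the standard inner product. -/
theorem stmt0 (x1 x2 y1 y2 : ℝ)
    (hx : x1 ^ 2 + x2 ^ 2 ≠ 0) (hy : y1 ^ 2 + y2 ^ 2 ≠ 0)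
    (hxy : (x1 + y1) ^ 2 + (x2 + y2) ^ 2 ≠ 0) :
    (x1 * y1 + x2 * y2) / ((x1 ^ 2 + x2 ^ 2) * (y1 ^ 2 + y2 ^ 2))
      - ((x1 + y1) * y1 + (x2 + y2) * y2) /
          (((x1 + y1) ^ 2 + (x2 + y2) ^ 2) * (y1 ^ 2 + y2 ^ 2))
      - (x1 * (x1 + y1) + x2 * (x2 + y2)) /
          ((x1 ^ 2 + x2 ^ 2) * ((x1 + y1) ^ 2 + (x2 + y2) ^ 2))
    = (-2 * (x1 * y2 - x2 * y1) ^ 2) /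
        ((x1 ^ 2 + x2 ^ 2) * (y1 ^ 2 + y2 ^ 2) * ((x1 + y1) ^ 2 + (x2 + y2) ^ 2)) := by
  field_simp
  ring
end

section
/- The sum over all pairs of coprime positive integers (b,d) of 1/(b²·d²·(b+d)²) equals 1/3. -/
/-!
Every coprime pair other than `(1, 1)` arises exactly once as `(b, b + d)` or `(b + d, d)` from a
coprime pair `(b, d)` (the Stern–Brocot tree). With `w (b, d) = 1 / (b d)³`, the identity
`b³ + d³ = (b + d)³ - 3bd(b + d)` gives `w (b, b + d) + w (b + d, d) = w (b, d) - 3 f (b, d)`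
for the summand `f` of the theorem. Summing over all coprime pairs turns this into
`∑ w - w (1, 1) = ∑ w - 3 ∑ f`, so `∑ f = w (1, 1) / 3 = 1 / 3`.
-/

abbrev CoprimePair : Type := {p : ℕ × ℕ // 0 < p.1 ∧ 0 < p.2 ∧ Nat.gcd p.1 p.2 = 1}

namespace CoprimePair

def one : CoprimePair := ⟨(1, 1), one_pos, one_pos, rfl⟩

def left (p : CoprimePair) : CoprimePair :=
  ⟨(p.1.1, p.1.1 + p.1.2), p.2.1, by have := p.2.1; omega, by
    simpa [add_comm, Nat.gcd_add_self_right] using p.2.2.2⟩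

def right (p : CoprimePair) : CoprimePair :=
  ⟨(p.1.1 + p.1.2, p.1.2), by have := p.2.1; omega, p.2.2.1, by
    simpa [Nat.gcd_add_self_left] using p.2.2.2⟩

def children : Unit ⊕ (CoprimePair ⊕ CoprimePair) → CoprimePair :=
  Sum.elim (fun _ ↦ one) (Sum.elim left right)

lemma children_injective : Function.Injective children := by
  rintro ((_ | p) | p | p) ((_ | q) | q | q) h <;>
    simp only [children, Sum.elim_inl, Sum.elim_inr, one, left, right, Subtype.ext_iff,
      Prod.ext_iff] at h <;>
    -- `one` has equal coordinates, `left p` a smaller first one, `right p` a smaller second one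
    first
    | rfl
    | (have := p.2.1; have := p.2.2.1; omega)
    | (have := q.2.1; have := q.2.2.1; omega)
    | (congr 2; ext <;> omega)

lemma children_surjective : Function.Surjective children := by
  rintro ⟨⟨b, d⟩, hb, hd, hbd⟩
  rcases lt_trichotomy b d with hlt | rfl | hgt
  · refine ⟨.inr (.inl ⟨(b, d - b), hb, by omega, ?_⟩), ?_⟩
    · simpa [Nat.gcd_sub_self_right hlt.le] using hbd
    · simp only [children, Sum.elim_inr, Sum.elim_inl, left, Subtype.mk.injEq, Prod.mk.injEq,
        true_and]
      omega
  · obtain rfl : b = 1 := by simpa using hbd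
    exact ⟨.inl (), rfl⟩
  · refine ⟨.inr (.inr ⟨(b - d, d), by omega, hd, ?_⟩), ?_⟩
    · simpa [Nat.gcd_sub_self_left hgt.le] using hbd
    · simp only [children, Sum.elim_inr, right, Subtype.mk.injEq, Prod.mk.injEq, and_true]
      omega

lemma left_injective : Function.Injective left :=
  children_injective.comp (Sum.inr_injective.comp Sum.inl_injective)

lemma right_injective : Function.Injective right :=
  children_injective.comp (Sum.inr_injective.comp Sum.inr_injective)

noncomputable def childrenEquiv : Unit ⊕ (CoprimePair ⊕ CoprimePair) ≃ CoprimePair :=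
  .ofBijective children ⟨children_injective, children_surjective⟩

theorem tsum_eq_add_tsum_left_add_tsum_right {α : Type*} [AddCommGroup α] [UniformSpace α]
    [IsUniformAddGroup α] [CompleteSpace α] [T2Space α] {g : CoprimePair → α}
    (hg : Summable g) : ∑' p, g p = g one + (∑' p, g (left p) + ∑' p, g (right p)) := by
  have hl : Summable (g ∘ left) := hg.comp_injective left_injective
  have hr : Summable (g ∘ right) := hg.comp_injective right_injective
  refine (childrenEquiv.hasSum_iff.mp ?_).tsum_eq
  exact (hasSum_unique _).sum (hl.hasSum.sum hr.hasSum)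

end CoprimePair

/-- `b³ + d³ = (b + d)³ - 3bd(b + d)`, divided by `b³d³(b + d)³`. -/
theorem one_div_cube_mul_add_one_div_cube_mul {K : Type*} [Field K] {b d : K} (hb : b ≠ 0)
    (hd : d ≠ 0) (hbd : b + d ≠ 0) :
    1 / (b ^ 3 * (b + d) ^ 3) + 1 / ((b + d) ^ 3 * d ^ 3)
      = 1 / (b ^ 3 * d ^ 3) - 3 * (1 / (b ^ 2 * d ^ 2 * (b + d) ^ 2)) := by
  field_simp
  ring

theorem summable_one_div_cube_mul_cube :
    Summable (fun p : ℕ × ℕ ↦ 1 / ((p.1 : ℝ) ^ 3 * (p.2 : ℝ) ^ 3)) := by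
  have h3 := Real.summable_one_div_nat_pow.mpr (by norm_num : 1 < 3)
  simpa only [one_div_mul_one_div] using
    h3.mul_of_nonneg h3 (fun _ ↦ by positivity) (fun _ ↦ by positivity)

namespace CoprimePair

noncomputable def invCubeProd (p : CoprimePair) : ℝ := 1 / ((p.1.1 : ℝ) ^ 3 * (p.1.2 : ℝ) ^ 3)

lemma summable_invCubeProd : Summable invCubeProd :=
  summable_one_div_cube_mul_cube.subtype _

lemma invCubeProd_left_add_invCubeProd_right (p : CoprimePair) :
    invCubeProd (left p) + invCubeProd (right p)
      = invCubeProd p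
        - 3 * (1 / ((p.1.1 : ℝ) ^ 2 * (p.1.2 : ℝ) ^ 2 * ((p.1.1 : ℝ) + p.1.2) ^ 2)) := by
  have hb : (p.1.1 : ℝ) ≠ 0 := by exact_mod_cast p.2.1.ne'
  have hd : (p.1.2 : ℝ) ≠ 0 := by exact_mod_cast p.2.2.1.ne'
  simpa [invCubeProd, left, right] using
    one_div_cube_mul_add_one_div_cube_mul hb hd (by positivity)

end CoprimePair

open CoprimePair

theorem stmt3 :
    (∑' p : {p : ℕ × ℕ // 0 < p.1 ∧ 0 < p.2 ∧ Nat.gcd p.1 p.2 = 1},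
        (1 : ℝ) / ((p.1.1 : ℝ) ^ 2 * (p.1.2 : ℝ) ^ 2 * ((p.1.1 : ℝ) + p.1.2) ^ 2))
      = 1 / 3 := by
  have hl : Summable fun p ↦ invCubeProd (left p) :=
    summable_invCubeProd.comp_injective left_injective
  have hr : Summable fun p ↦ invCubeProd (right p) :=
    summable_invCubeProd.comp_injective right_injective
  calc _ = ∑' p, (invCubeProd p - (invCubeProd (left p) + invCubeProd (right p))) / 3 := by
        congr 1 with p; rw [invCubeProd_left_add_invCubeProd_right]; ring
    _ = (∑' p, invCubeProd p
          - (∑' p, invCubeProd (left p) + ∑' p, invCubeProd (right p))) / 3 := by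
        rw [tsum_div_const, summable_invCubeProd.tsum_sub (hl.add hr), hl.tsum_add hr]
    _ = 1 / 3 := by
        rw [tsum_eq_add_tsum_left_add_tsum_right summable_invCubeProd]; simp [invCubeProd, one]
end

section
/- Σ_{b,d>0} 1/(b²d²(b+d)²) = ζ(6) · Σ_{b,d>0, gcd(b,d)=1} 1/(b²d²(b+d)²), where the first sum runs over all pairs of positive integers (b,d) (not necessarily coprime); moreover, this unrestricted sum equals ζ(6)/3. -/
open Finset Filter Topology

noncomputable def zr (k : ℕ) : ℝ := ∑' n : ℕ, 1 / ((n : ℝ) + 1) ^ k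

lemma summable_zr {k : ℕ} (hk : 1 < k) : Summable (fun n : ℕ => 1 / ((n : ℝ) + 1) ^ k) := by
  have h := (Real.summable_one_div_nat_pow (p := k)).mpr hk
  have h2 := (summable_nat_add_iff 1).mpr h
  exact h2.congr fun n => by push_cast; ring_nf

lemma hasSum_zr {k : ℕ} (hk : 1 < k) :
    HasSum (fun n : ℕ => 1 / ((n : ℝ) + 1) ^ k) (zr k) := (summable_zr hk).hasSum

lemma zr_pos {k : ℕ} (hk : 1 < k) : 0 < zr k := by
  have := hasSum_zr hk
  have h0 : (0:ℝ) < 1 / ((0:ℕ) + (1:ℝ)) ^ k := by positivity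
  exact this.tsum_eq ▸ Summable.tsum_pos this.summable (fun n => by positivity) 0 h0

lemma bernoulli'_five : bernoulli' 5 = 0 := by
  have h1 : Nat.choose 5 2 = 10 := by decide
  have h2 : Nat.choose 5 4 = 5 := by decide
  rw [bernoulli'_def]
  norm_num [sum_range_succ, h1, h2]

lemma bernoulli'_six : bernoulli' 6 = 1 / 42 := by
  have h1 : Nat.choose 6 2 = 15 := by decide
  have h2 : Nat.choose 6 4 = 15 := by decide
  have h3 : Nat.choose 6 5 = 6 := by decide
  rw [bernoulli'_def]
  norm_num [sum_range_succ, h1, h2, h3, bernoulli'_five]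

lemma hasSum_zeta_six : HasSum (fun n : ℕ => (1:ℝ) / (n : ℝ) ^ 6) (Real.pi ^ 6 / 945) := by
  have := hasSum_zeta_nat (k := 3) (by norm_num)
  norm_num at this
  convert this using 1
  · ext n; rw [one_div]
  rw [bernoulli_eq_bernoulli'_of_ne_one (by norm_num), bernoulli'_six]
  norm_num [Nat.factorial]
  ring

lemma zr_eq {k : ℕ} (hk : 0 < k) {a : ℝ} (h : HasSum (fun n : ℕ => 1 / (n : ℝ) ^ k) a) :
    zr k = a := by
  have h2 := (hasSum_nat_add_iff' (f := fun n : ℕ => 1 / (n : ℝ) ^ k) 1).mpr h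
  simp only [range_one, sum_singleton, Nat.cast_zero, zero_pow hk.ne', div_zero, sub_zero] at h2
  have h3 : HasSum (fun n : ℕ => 1 / ((n : ℝ) + 1) ^ k) a := h2.congr_fun fun n => by push_cast; ring_nf
  exact h3.tsum_eq

lemma zr_two : zr 2 = Real.pi ^ 2 / 6 := zr_eq (by norm_num) hasSum_zeta_two
lemma zr_four : zr 4 = Real.pi ^ 4 / 90 := zr_eq (by norm_num) hasSum_zeta_four
lemma zr_six : zr 6 = Real.pi ^ 6 / 945 := zr_eq (by norm_num) hasSum_zeta_six

lemma zeta_six_eq : riemannZeta 6 = ((zr 6 : ℝ) : ℂ) := by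
  rw [zeta_eq_tsum_one_div_nat_add_one_cpow (by norm_num)]
  rw [zr, Complex.ofReal_tsum]
  congr 1
  ext n
  rw [show ((6:ℂ)) = ((6:ℕ):ℂ) by norm_num, Complex.cpow_natCast]
  push_cast
  norm_num

noncomputable def F : ℕ × ℕ → ℝ := fun p =>
  1 / (((p.1 : ℝ) + 1) ^ 2 * ((p.2 : ℝ) + 1) ^ 2 * ((p.1 : ℝ) + (p.2 : ℝ) + 2) ^ 2)

lemma summable_prod_pow {i j : ℕ} (hi : 1 < i) (hj : 1 < j) :
    Summable (fun p : ℕ × ℕ => 1 / (((p.1 : ℝ) + 1) ^ i * ((p.2 : ℝ) + 1) ^ j)) := by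
  have h := (summable_zr hi).mul_of_nonneg (summable_zr hj)
    (fun n => by positivity) (fun n => by positivity)
  exact h.congr fun p => by rw [div_mul_div_comm, one_mul]

lemma summable_P : Summable (fun p : ℕ × ℕ => 1 / (((p.1 : ℝ) + 1) ^ 2 * ((p.2 : ℝ) + 1) ^ 2)) :=
  summable_prod_pow one_lt_two one_lt_two

lemma summable_of_le_P {f : ℕ × ℕ → ℝ} (h0 : ∀ p, 0 ≤ f p)
    (h : ∀ p, f p ≤ 1 / (((p.1 : ℝ) + 1) ^ 2 * ((p.2 : ℝ) + 1) ^ 2)) : Summable f :=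
  Summable.of_nonneg_of_le h0 h summable_P

lemma one_div_le_one_div_aux {x y : ℝ} (hy : 0 < y) (h : y ≤ x) : 1 / x ≤ 1 / y :=
  one_div_le_one_div_of_le hy h

lemma summable_F : Summable F := by
  apply summable_of_le_P (fun p => by unfold F; positivity)
  intro p
  apply one_div_le_one_div_aux (by positivity)
  have ha : (0:ℝ) ≤ (p.1 : ℝ) := Nat.cast_nonneg _
  have hb : (0:ℝ) ≤ (p.2 : ℝ) := Nat.cast_nonneg _
  have hC : (1:ℝ) ≤ (p.1 : ℝ) + (p.2 : ℝ) + 2 := by linarith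
  have hAB : (0:ℝ) ≤ ((p.1:ℝ)+1)^2 * ((p.2:ℝ)+1)^2 := by positivity
  nlinarith [mul_nonneg hAB (by nlinarith : (0:ℝ) ≤ ((p.1:ℝ) + (p.2:ℝ) + 2)^2 - 1)]

noncomputable def tA : ℕ × ℕ → ℝ := fun p =>
  1 / (((p.1 : ℝ) + 1) ^ 2 * ((p.1 : ℝ) + (p.2 : ℝ) + 2) ^ 4)
noncomputable def tB : ℕ × ℕ → ℝ := fun p =>
  1 / (((p.2 : ℝ) + 1) ^ 2 * ((p.1 : ℝ) + (p.2 : ℝ) + 2) ^ 4)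
noncomputable def tL : ℕ × ℕ → ℝ := fun p =>
  1 / (((p.1 : ℝ) + 1) * ((p.1 : ℝ) + (p.2 : ℝ) + 2) ^ 5)
noncomputable def tM : ℕ × ℕ → ℝ := fun p =>
  1 / (((p.2 : ℝ) + 1) * ((p.1 : ℝ) + (p.2 : ℝ) + 2) ^ 5)

lemma abc_bound1 {a b : ℝ} (ha : 1 ≤ a) (hb : 1 ≤ b) : a^2*b^2 ≤ a^2*(a+b)^4 := by
  nlinarith [sq_nonneg a, sq_nonneg b, sq_nonneg (a+b), sq_nonneg (a*b),
    mul_le_mul hb hb (by linarith) (by linarith : (0:ℝ) ≤ b),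
    sq_nonneg ((a+b)^2 - b^2), mul_nonneg (sq_nonneg a) (mul_nonneg (by nlinarith : (0:ℝ) ≤ (a+b)^2 - b^2) (by positivity : (0:ℝ) ≤ (a+b)^2)), mul_nonneg (sq_nonneg a) (mul_nonneg (sq_nonneg b) (by nlinarith : (0:ℝ) ≤ (a+b)^2 - 1))]

lemma abc_bound3 {a b : ℝ} (ha : 1 ≤ a) (hb : 1 ≤ b) : a^2*b^2 ≤ a*(a+b)^5 := by
  have h0a : (0:ℝ) ≤ a := by linarith
  have h0b : (0:ℝ) ≤ b := by linarith
  have hca : a ≤ a + b := by linarith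
  have hcb : b ≤ a + b := by linarith
  have h1 : a * b ≤ (a+b) * (a+b) := mul_le_mul hca hcb h0b (by linarith)
  have h2 : a * b * b ≤ (a+b) * (a+b) * (a+b) := mul_le_mul h1 hcb h0b (by positivity)
  have h3 : (a+b)^3 ≤ (a+b)^5 := pow_le_pow_right₀ (by linarith) (by norm_num)
  calc a^2*b^2 = a * (a*b*b) := by ring
    _ ≤ a * ((a+b)*(a+b)*(a+b)) := by apply mul_le_mul_of_nonneg_left h2 h0a
    _ = a * (a+b)^3 := by ring
    _ ≤ a * (a+b)^5 := by apply mul_le_mul_of_nonneg_left h3 h0a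

lemma abc_bound5 {a b : ℝ} (ha : 1 ≤ a) (hb : 1 ≤ b) : a^2*b^2 ≤ a^4*b*(a+b) := by
  have h0a : (0:ℝ) ≤ a := by linarith
  have h0b : (0:ℝ) ≤ b := by linarith
  have h1 : (1:ℝ) ≤ a * a := by nlinarith
  have key : b ≤ a^2*(a+b) := by nlinarith
  calc a^2*b^2 = (a^2*b)*b := by ring
    _ ≤ (a^2*b)*(a^2*(a+b)) := mul_le_mul_of_nonneg_left key (by positivity)
    _ = a^4*b*(a+b) := by ring

lemma summable_tA : Summable tA := by
  apply summable_of_le_P (fun p => by unfold tA; positivity)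
  intro p
  apply one_div_le_one_div_aux (by positivity)
  have h := abc_bound1 (by simp [Nat.cast_nonneg] : (1:ℝ) ≤ (p.1:ℝ)+1) (by simp [Nat.cast_nonneg] : (1:ℝ) ≤ (p.2:ℝ)+1)
  calc ((p.1:ℝ)+1)^2 * ((p.2:ℝ)+1)^2 ≤ ((p.1:ℝ)+1)^2 * (((p.1:ℝ)+1)+((p.2:ℝ)+1))^4 := h
    _ = ((p.1:ℝ)+1)^2 * ((p.1:ℝ)+(p.2:ℝ)+2)^4 := by ring

lemma summable_tB : Summable tB := by
  apply summable_of_le_P (fun p => by unfold tB; positivity)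
  intro p
  apply one_div_le_one_div_aux (by positivity)
  have h := abc_bound1 (by simp [Nat.cast_nonneg] : (1:ℝ) ≤ (p.2:ℝ)+1) (by simp [Nat.cast_nonneg] : (1:ℝ) ≤ (p.1:ℝ)+1)
  calc ((p.1:ℝ)+1)^2 * ((p.2:ℝ)+1)^2 ≤ ((p.2:ℝ)+1)^2 * (((p.2:ℝ)+1)+((p.1:ℝ)+1))^4 := by linarith [h]
    _ = ((p.2:ℝ)+1)^2 * ((p.1:ℝ)+(p.2:ℝ)+2)^4 := by ring

lemma summable_tL : Summable tL := by
  apply summable_of_le_P (fun p => by unfold tL; positivity)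
  intro p
  apply one_div_le_one_div_aux (by positivity)
  have h := abc_bound3 (by simp [Nat.cast_nonneg] : (1:ℝ) ≤ (p.1:ℝ)+1) (by simp [Nat.cast_nonneg] : (1:ℝ) ≤ (p.2:ℝ)+1)
  calc ((p.1:ℝ)+1)^2 * ((p.2:ℝ)+1)^2 ≤ ((p.1:ℝ)+1) * (((p.1:ℝ)+1)+((p.2:ℝ)+1))^5 := h
    _ = ((p.1:ℝ)+1) * ((p.1:ℝ)+(p.2:ℝ)+2)^5 := by ring

lemma summable_tM : Summable tM := by
  apply summable_of_le_P (fun p => by unfold tM; positivity)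
  intro p
  apply one_div_le_one_div_aux (by positivity)
  have h := abc_bound3 (by simp [Nat.cast_nonneg] : (1:ℝ) ≤ (p.2:ℝ)+1) (by simp [Nat.cast_nonneg] : (1:ℝ) ≤ (p.1:ℝ)+1)
  calc ((p.1:ℝ)+1)^2 * ((p.2:ℝ)+1)^2 ≤ ((p.2:ℝ)+1) * (((p.2:ℝ)+1)+((p.1:ℝ)+1))^5 := by linarith [h]
    _ = ((p.2:ℝ)+1) * ((p.1:ℝ)+(p.2:ℝ)+2)^5 := by ring

lemma tB_tsum : ∑' p, tB p = ∑' p, tA p := by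
  rw [← (Equiv.prodComm ℕ ℕ).tsum_eq tA]
  apply tsum_congr
  intro p
  unfold tA tB
  simp only [Equiv.prodComm_apply, Prod.fst_swap, Prod.snd_swap]
  ring_nf

lemma tM_tsum : ∑' p, tM p = ∑' p, tL p := by
  rw [← (Equiv.prodComm ℕ ℕ).tsum_eq tL]
  apply tsum_congr
  intro p
  unfold tL tM
  simp only [Equiv.prodComm_apply, Prod.fst_swap, Prod.snd_swap]
  ring_nf

lemma F_decomp (p : ℕ × ℕ) : F p = tA p + tB p + 2 * tL p + 2 * tM p := by
  unfold F tA tB tL tM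
  have ha : (0:ℝ) < (p.1:ℝ)+1 := by positivity
  have hb : (0:ℝ) < (p.2:ℝ)+1 := by positivity
  have hc : (0:ℝ) < (p.1:ℝ)+(p.2:ℝ)+2 := by positivity
  field_simp
  ring

lemma S_eq_2A_4L : ∑' p, F p = 2 * ∑' p, tA p + 4 * ∑' p, tL p := by
  have h1 : ∑' p, F p = ∑' p, (tA p + tB p + (2 * tL p + 2 * tM p)) := by
    apply tsum_congr; intro p; rw [F_decomp]; ring
  rw [h1, Summable.tsum_add (summable_tA.add summable_tB) ((summable_tL.mul_left 2).add (summable_tM.mul_left 2)),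
    Summable.tsum_add summable_tA summable_tB, Summable.tsum_add (summable_tL.mul_left 2) (summable_tM.mul_left 2),
    tsum_mul_left, tsum_mul_left, tB_tsum, tM_tsum]
  ring

noncomputable def H1 (m : ℕ) : ℝ := ∑ k ∈ range (m+1), 1/((k:ℝ)+1)
noncomputable def H2 (m : ℕ) : ℝ := ∑ k ∈ range (m+1), 1/((k:ℝ)+1)^2

lemma telescope (m : ℕ) :
    HasSum (fun n : ℕ => 1/((n:ℝ)+1) - 1/((m:ℝ)+(n:ℝ)+2)) (H1 m) := by
  set u : ℕ → ℝ := fun n => 1/((n:ℝ)+1) with hu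
  have hnn : ∀ n : ℕ, 0 ≤ 1/((n:ℝ)+1) - 1/((m:ℝ)+(n:ℝ)+2) := by
    intro n
    have : 1/((m:ℝ)+(n:ℝ)+2) ≤ 1/((n:ℝ)+1) :=
      one_div_le_one_div_of_le (by positivity) (by push_cast; linarith [Nat.cast_nonneg (α := ℝ) m])
    linarith
  rw [hasSum_iff_tendsto_nat_of_nonneg hnn]
  have key : ∀ N : ℕ, ∑ n ∈ range N, (1/((n:ℝ)+1) - 1/((m:ℝ)+(n:ℝ)+2))
      = H1 m - ∑ i ∈ range (m+1), u (N + i) := by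
    intro N
    have e1 : ∀ n : ℕ, 1/((m:ℝ)+(n:ℝ)+2) = u (n + (m+1)) := by
      intro n; simp only [hu]; push_cast; ring_nf
    have e2 : ∑ n ∈ range N, (1/((n:ℝ)+1) - 1/((m:ℝ)+(n:ℝ)+2))
        = ∑ n ∈ range N, u n - ∑ n ∈ range N, u (n + (m+1)) := by
      rw [← Finset.sum_sub_distrib]
      exact Finset.sum_congr rfl fun n _ => by rw [e1]
    have e3 : ∑ n ∈ range ((m+1) + N), u n
        = ∑ n ∈ range (m+1), u n + ∑ n ∈ range N, u ((m+1) + n) := Finset.sum_range_add u (m+1) N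
    have e4 : ∑ n ∈ range (N + (m+1)), u n
        = ∑ n ∈ range N, u n + ∑ i ∈ range (m+1), u (N + i) := Finset.sum_range_add u N (m+1)
    have e5 : ((m+1) + N) = (N + (m+1)) := by omega
    have e6 : ∑ n ∈ range N, u (n + (m+1)) = ∑ n ∈ range N, u ((m+1) + n) := by
      exact Finset.sum_congr rfl fun n _ => by rw [add_comm]
    rw [e2, e6]
    have : ∑ n ∈ range N, u ((m+1)+n) = ∑ n ∈ range ((m+1)+N), u n - ∑ n ∈ range (m+1), u n := by
      rw [e3]; ring
    rw [this, e5, e4, H1]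
    ring
  simp_rw [key]
  have : Tendsto (fun N : ℕ => ∑ i ∈ range (m+1), u (N + i)) atTop (𝓝 0) := by
    have h0 : (0:ℝ) = ∑ _i ∈ range (m+1), (0:ℝ) := by simp
    rw [h0]
    apply tendsto_finset_sum
    intro i _
    have : Tendsto (fun N : ℕ => u (N + i)) atTop (𝓝 0) := by
      have := tendsto_one_div_add_atTop_nhds_zero_nat (𝕜 := ℝ)
      have hcomp := this.comp (tendsto_add_atTop_nat i)
      exact hcomp.congr fun N => by simp only [hu, Function.comp]
    exact this
  have := tendsto_const_nhds (x := H1 m) (f := atTop (α := ℕ)) |>.sub this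
  simpa using this

lemma shift_sq (m : ℕ) :
    HasSum (fun n : ℕ => 1/((m:ℝ)+(n:ℝ)+2)^2) (zr 2 - H2 m) := by
  have hs := summable_zr (k := 2) one_lt_two
  have key := Summable.sum_add_tsum_nat_add (f := fun n : ℕ => 1/((n:ℝ)+1)^2) (m+1) hs
  have hsum : (∑ i ∈ range (m+1), 1/((i:ℝ)+1)^2) = H2 m := rfl
  have heq : ∀ n : ℕ, 1/(((n + (m+1) : ℕ) : ℝ)+1)^2 = 1/((m:ℝ)+(n:ℝ)+2)^2 := by
    intro n; push_cast; ring_nf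
  have hshift : Summable (fun n : ℕ => 1/((m:ℝ)+(n:ℝ)+2)^2) :=
    ((summable_nat_add_iff (m+1)).mpr hs).congr heq
  have hts : ∑' n : ℕ, 1/((m:ℝ)+(n:ℝ)+2)^2 = zr 2 - H2 m := by
    rw [hsum] at key
    rw [tsum_congr heq] at key
    have : H2 m + ∑' n : ℕ, 1/((m:ℝ)+(n:ℝ)+2)^2 = zr 2 := key
    linarith
  exact hts ▸ hshift.hasSum

lemma innerF_hasSum (m : ℕ) :
    HasSum (fun n : ℕ => F (m, n))
      (2*zr 2/((m:ℝ)+1)^4 - H2 m/((m:ℝ)+1)^4 - 2*H1 m/((m:ℝ)+1)^5) := by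
  have h1 : HasSum (fun n : ℕ => 1/((n:ℝ)+1)^2) (zr 2) := hasSum_zr one_lt_two
  have h2 := shift_sq m
  have h3 := telescope m
  have big := ((h1.add h2).mul_left (1/((m:ℝ)+1)^4)).sub (h3.mul_left (2/((m:ℝ)+1)^5))
  have hfun : ∀ n : ℕ,
      (1/((m:ℝ)+1)^4) * (1/((n:ℝ)+1)^2 + 1/((m:ℝ)+(n:ℝ)+2)^2)
        - (2/((m:ℝ)+1)^5) * (1/((n:ℝ)+1) - 1/((m:ℝ)+(n:ℝ)+2)) = F (m, n) := by
    intro n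
    unfold F
    have ha : (0:ℝ) < (m:ℝ)+1 := by positivity
    have hb : (0:ℝ) < (n:ℝ)+1 := by positivity
    have hc : (0:ℝ) < (m:ℝ)+(n:ℝ)+2 := by positivity
    field_simp
    ring
  have hval : (1/((m:ℝ)+1)^4) * (zr 2 + (zr 2 - H2 m)) - (2/((m:ℝ)+1)^5) * H1 m
      = 2*zr 2/((m:ℝ)+1)^4 - H2 m/((m:ℝ)+1)^4 - 2*H1 m/((m:ℝ)+1)^5 := by ring
  exact hval ▸ (big.congr_fun fun n => (hfun n).symm)

def e2 : (Σ m : ℕ, Fin m) ≃ ℕ × ℕ where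
  toFun x := (x.2.1, x.1 - x.2.1 - 1)
  invFun p := ⟨p.1 + p.2 + 1, ⟨p.1, by omega⟩⟩
  left_inv := by
    rintro ⟨m, ⟨k, hk⟩⟩
    have hm : k + (m - k - 1) + 1 = m := by omega
    exact Sigma.ext hm ((Fin.heq_ext_iff hm).mpr rfl)
  right_inv := by
    rintro ⟨k, j⟩
    simp only
    congr 1
    omega

lemma tsum_pair_eq_sigma (f : ℕ × ℕ → ℝ) (hf : Summable f) :
    ∑' p, f p = ∑' m : ℕ, ∑ k ∈ range m, f (k, m - k - 1) := by
  rw [← e2.tsum_eq f]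
  rw [show (fun c : (m : ℕ) × Fin m => f (e2 c)) = f ∘ ⇑e2 from rfl,
    Summable.tsum_sigma (e2.summable_iff.mpr hf)]
  apply tsum_congr
  intro m
  rw [tsum_fintype]
  rw [← Fin.sum_univ_eq_sum_range (fun k => f (k, m - k - 1)) m]
  rfl

lemma A_eq : ∑' p, tA p = ∑' m : ℕ, ∑ k ∈ range m, 1/(((k:ℝ)+1)^2*((m:ℝ)+1)^4) := by
  rw [tsum_pair_eq_sigma tA summable_tA]
  apply tsum_congr
  intro m
  apply Finset.sum_congr rfl
  intro k hk
  have hk' : k < m := Finset.mem_range.mp hk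
  unfold tA
  have : ((m - k - 1 : ℕ) : ℝ) = (m:ℝ) - (k:ℝ) - 1 := by
    have : (m - k - 1 : ℕ) + (k + 1) = m := by omega
    have := congrArg (fun x : ℕ => (x:ℝ)) this
    push_cast at this
    linarith
  simp only [this]
  ring_nf

lemma L_eq : ∑' p, tL p = ∑' m : ℕ, ∑ k ∈ range m, 1/(((k:ℝ)+1)*((m:ℝ)+1)^5) := by
  rw [tsum_pair_eq_sigma tL summable_tL]
  apply tsum_congr
  intro m
  apply Finset.sum_congr rfl
  intro k hk
  have hk' : k < m := Finset.mem_range.mp hk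
  unfold tL
  have : ((m - k - 1 : ℕ) : ℝ) = (m:ℝ) - (k:ℝ) - 1 := by
    have : (m - k - 1 : ℕ) + (k + 1) = m := by omega
    have := congrArg (fun x : ℕ => (x:ℝ)) this
    push_cast at this
    linarith
  simp only [this]
  ring_nf

lemma H2_le : ∀ m : ℕ, H2 m ≤ zr 2 := fun m =>
  Summable.sum_le_tsum (range (m+1)) (fun k _ => by positivity) (summable_zr one_lt_two)

lemma H1_le : ∀ m : ℕ, H1 m ≤ (m:ℝ) + 1 := by
  intro m
  have : H1 m ≤ ∑ _k ∈ range (m+1), (1:ℝ) := by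
    apply Finset.sum_le_sum
    intro k _
    rw [div_le_one (by positivity)]
    linarith [Nat.cast_nonneg (α := ℝ) k]
  simpa using this

lemma H2_nonneg (m : ℕ) : 0 ≤ H2 m := Finset.sum_nonneg fun k _ => by positivity
lemma H1_nonneg (m : ℕ) : 0 ≤ H1 m := Finset.sum_nonneg fun k _ => by positivity

lemma summable_Q2 : Summable (fun m : ℕ => H2 m/((m:ℝ)+1)^4) := by
  apply Summable.of_nonneg_of_le (fun m => div_nonneg (H2_nonneg m) (by positivity))
    (fun m => ?_) ((summable_zr (k := 4) (by norm_num)).mul_left (zr 2))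
  calc H2 m/((m:ℝ)+1)^4 ≤ zr 2/((m:ℝ)+1)^4 := by gcongr; exact H2_le m
    _ = zr 2 * (1/((m:ℝ)+1)^4) := by ring

lemma summable_Q1 : Summable (fun m : ℕ => H1 m/((m:ℝ)+1)^5) := by
  apply Summable.of_nonneg_of_le (fun m => div_nonneg (H1_nonneg m) (by positivity))
    (fun m => ?_) (summable_zr (k := 4) (by norm_num))
  calc H1 m/((m:ℝ)+1)^5 ≤ ((m:ℝ)+1)/((m:ℝ)+1)^5 := by gcongr; exact H1_le m
    _ = 1/((m:ℝ)+1)^4 := by field_simp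

lemma star1 : ∑' p, F p = 2*zr 2*zr 4 - (∑' m : ℕ, H2 m/((m:ℝ)+1)^4)
    - 2*(∑' m : ℕ, H1 m/((m:ℝ)+1)^5) := by
  rw [Summable.tsum_prod summable_F]
  have h1 : ∀ m : ℕ, ∑' n : ℕ, F (m, n)
      = (2*zr 2)*(1/((m:ℝ)+1)^4) - (H2 m/((m:ℝ)+1)^4 + 2*(H1 m/((m:ℝ)+1)^5)) := by
    intro m
    rw [(innerF_hasSum m).tsum_eq]
    ring
  rw [tsum_congr h1]
  rw [Summable.tsum_sub ((summable_zr (k := 4) (by norm_num)).mul_left (2*zr 2))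
    (summable_Q2.add (summable_Q1.mul_left 2))]
  rw [tsum_mul_left, Summable.tsum_add summable_Q2 (summable_Q1.mul_left 2), tsum_mul_left]
  have : ∑' m : ℕ, 1/((m:ℝ)+1)^4 = zr 4 := rfl
  rw [this]
  ring

lemma summable_rangeA : Summable (fun m : ℕ => ∑ k ∈ range m, 1/(((k:ℝ)+1)^2*((m:ℝ)+1)^4)) := by
  apply Summable.of_nonneg_of_le (fun m => Finset.sum_nonneg fun k _ => by positivity)
    (fun m => ?_) ((summable_zr (k := 4) (by norm_num)).mul_left (zr 2))
  have h1 : ∑ k ∈ range m, 1/(((k:ℝ)+1)^2*((m:ℝ)+1)^4)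
      = (∑ k ∈ range m, 1/((k:ℝ)+1)^2)/((m:ℝ)+1)^4 := by
    rw [Finset.sum_div]
    exact Finset.sum_congr rfl fun k _ => by rw [div_div]
  rw [h1]
  have h2 : (∑ k ∈ range m, 1/((k:ℝ)+1)^2) ≤ zr 2 :=
    Summable.sum_le_tsum (range m) (fun k _ => by positivity) (summable_zr one_lt_two)
  calc (∑ k ∈ range m, 1/((k:ℝ)+1)^2)/((m:ℝ)+1)^4 ≤ zr 2/((m:ℝ)+1)^4 := by gcongr
    _ = zr 2 * (1/((m:ℝ)+1)^4) := by ring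

lemma summable_rangeL : Summable (fun m : ℕ => ∑ k ∈ range m, 1/(((k:ℝ)+1)*((m:ℝ)+1)^5)) := by
  apply Summable.of_nonneg_of_le (fun m => Finset.sum_nonneg fun k _ => by positivity)
    (fun m => ?_) (summable_zr (k := 4) (by norm_num))
  have h1 : ∑ k ∈ range m, 1/(((k:ℝ)+1)*((m:ℝ)+1)^5)
      = (∑ k ∈ range m, 1/((k:ℝ)+1))/((m:ℝ)+1)^5 := by
    rw [Finset.sum_div]
    exact Finset.sum_congr rfl fun k _ => by rw [div_div]
  rw [h1]
  have h2 : (∑ k ∈ range m, 1/((k:ℝ)+1)) ≤ (m:ℝ) + 1 := by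
    have := H1_le m
    unfold H1 at this
    have hstep : (∑ k ∈ range m, 1/((k:ℝ)+1)) ≤ ∑ k ∈ range (m+1), 1/((k:ℝ)+1) := by
      apply Finset.sum_le_sum_of_subset_of_nonneg (Finset.range_subset_range.mpr (by omega))
      intro k _ _; positivity
    linarith
  calc (∑ k ∈ range m, 1/((k:ℝ)+1))/((m:ℝ)+1)^5 ≤ ((m:ℝ)+1)/((m:ℝ)+1)^5 := by gcongr
    _ = 1/((m:ℝ)+1)^4 := by field_simp

lemma Q2_eq : ∑' m : ℕ, H2 m/((m:ℝ)+1)^4 = (∑' p, tA p) + zr 6 := by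
  rw [A_eq]
  have hpt : ∀ m : ℕ, H2 m/((m:ℝ)+1)^4
      = (∑ k ∈ range m, 1/(((k:ℝ)+1)^2*((m:ℝ)+1)^4)) + 1/((m:ℝ)+1)^6 := by
    intro m
    unfold H2
    rw [Finset.sum_div, Finset.sum_range_succ]
    congr 1
    · exact Finset.sum_congr rfl fun k _ => by rw [div_div]
    · rw [div_div]; ring_nf
  rw [tsum_congr hpt, Summable.tsum_add summable_rangeA (summable_zr (k := 6) (by norm_num))]
  rfl

lemma Q1_eq : ∑' m : ℕ, H1 m/((m:ℝ)+1)^5 = (∑' p, tL p) + zr 6 := by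
  rw [L_eq]
  have hpt : ∀ m : ℕ, H1 m/((m:ℝ)+1)^5
      = (∑ k ∈ range m, 1/(((k:ℝ)+1)*((m:ℝ)+1)^5)) + 1/((m:ℝ)+1)^6 := by
    intro m
    unfold H1
    rw [Finset.sum_div, Finset.sum_range_succ]
    congr 1
    · exact Finset.sum_congr rfl fun k _ => by rw [div_div]
    · rw [div_div]; ring_nf
  rw [tsum_congr hpt, Summable.tsum_add summable_rangeL (summable_zr (k := 6) (by norm_num))]
  rfl

lemma S_val : ∑' p, F p = zr 6 / 3 := by
  have h1 := star1
  rw [Q2_eq, Q1_eq] at h1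
  have h2 := S_eq_2A_4L
  have hz : 2*zr 2*zr 4 = 7/2 * zr 6 := by
    rw [zr_two, zr_four, zr_six]; ring
  rw [hz] at h1
  linarith

noncomputable def G : ℕ × ℕ → ℝ := fun p =>
  1 / ((p.1 : ℝ) ^ 2 * (p.2 : ℝ) ^ 2 * ((p.1 : ℝ) + (p.2 : ℝ)) ^ 2)

def ePos : ℕ × ℕ ≃ {p : ℕ × ℕ // 0 < p.1 ∧ 0 < p.2} where
  toFun p := ⟨(p.1 + 1, p.2 + 1), by omega, by omega⟩
  invFun q := (q.1.1 - 1, q.1.2 - 1)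
  left_inv p := by simp
  right_inv q := by
    apply Subtype.ext
    obtain ⟨⟨b, d⟩, hb, hd⟩ := q
    simp only
    have h1 : b - 1 + 1 = b := by omega
    have h2 : d - 1 + 1 = d := by omega
    rw [h1, h2]

lemma G_ePos (p : ℕ × ℕ) : G (ePos p).val = F p := by
  unfold G F ePos
  simp only [Equiv.coe_fn_mk]
  push_cast
  ring_nf

lemma tsum_Pos : (∑' q : {p : ℕ × ℕ // 0 < p.1 ∧ 0 < p.2}, G q.val) = ∑' p, F p := by
  rw [← ePos.tsum_eq (fun q => G q.val)]
  exact tsum_congr G_ePos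

lemma summable_G_Pos : Summable (fun q : {p : ℕ × ℕ // 0 < p.1 ∧ 0 < p.2} => G q.val) := by
  apply ePos.summable_iff.mp
  exact summable_F.congr fun p => (G_ePos p).symm

lemma summable_G : Summable G := by
  set s : Set (ℕ × ℕ) := {p | 0 < p.1 ∧ 0 < p.2} with hs
  apply (summable_subtype_and_compl (s := s)).mp
  constructor
  · exact summable_G_Pos
  · apply Summable.congr (summable_zero (β := ↥sᶜ) (α := ℝ)) ?_
    rintro ⟨⟨b, d⟩, hx⟩
    simp only [hs, Set.mem_compl_iff, Set.mem_setOf_eq, not_and_or, not_lt,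
      Nat.le_zero] at hx
    unfold G
    rcases hx with h | h <;> · simp [h]

lemma summable_G_cop :
    Summable (fun q : {p : ℕ × ℕ // 0 < p.1 ∧ 0 < p.2 ∧ Nat.gcd p.1 p.2 = 1} => G q.val) :=
  summable_G.subtype {p : ℕ × ℕ | 0 < p.1 ∧ 0 < p.2 ∧ Nat.gcd p.1 p.2 = 1}

def eg : ℕ × {p : ℕ × ℕ // 0 < p.1 ∧ 0 < p.2 ∧ Nat.gcd p.1 p.2 = 1} ≃
    {p : ℕ × ℕ // 0 < p.1 ∧ 0 < p.2} where
  toFun x := ⟨((x.1 + 1) * x.2.1.1, (x.1 + 1) * x.2.1.2),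
    Nat.mul_pos (by omega) x.2.2.1, Nat.mul_pos (by omega) x.2.2.2.1⟩
  invFun q :=
    (Nat.gcd q.1.1 q.1.2 - 1,
     ⟨(q.1.1 / Nat.gcd q.1.1 q.1.2, q.1.2 / Nat.gcd q.1.1 q.1.2), by
        have hg : 0 < Nat.gcd q.1.1 q.1.2 := Nat.gcd_pos_of_pos_left _ q.2.1
        exact ⟨Nat.div_pos (Nat.le_of_dvd q.2.1 (Nat.gcd_dvd_left _ _)) hg,
          Nat.div_pos (Nat.le_of_dvd q.2.2 (Nat.gcd_dvd_right _ _)) hg,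
          Nat.coprime_div_gcd_div_gcd hg⟩⟩)
  left_inv := by
    rintro ⟨g, ⟨⟨b, d⟩, hb, hd, hco⟩⟩
    have hgcd : Nat.gcd ((g + 1) * b) ((g + 1) * d) = g + 1 := by
      rw [Nat.gcd_mul_left, hco, mul_one]
    simp only [hgcd]
    have h1 : (g + 1) * b / (g + 1) = b := Nat.mul_div_cancel_left b (by omega)
    have h2 : (g + 1) * d / (g + 1) = d := Nat.mul_div_cancel_left d (by omega)
    have h3 : g + 1 - 1 = g := by omega
    simp only [h1, h2, h3]
  right_inv := by
    rintro ⟨⟨b, d⟩, hb, hd⟩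
    apply Subtype.ext
    have hg : 0 < Nat.gcd b d := Nat.gcd_pos_of_pos_left _ hb
    simp only
    have h0 : Nat.gcd b d - 1 + 1 = Nat.gcd b d := by omega
    rw [h0]
    have h1 : Nat.gcd b d * (b / Nat.gcd b d) = b := Nat.mul_div_cancel' (Nat.gcd_dvd_left b d)
    have h2 : Nat.gcd b d * (d / Nat.gcd b d) = d := Nat.mul_div_cancel' (Nat.gcd_dvd_right b d)
    rw [h1, h2]

lemma G_eg (x : ℕ × {p : ℕ × ℕ // 0 < p.1 ∧ 0 < p.2 ∧ Nat.gcd p.1 p.2 = 1}) :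
    G (eg x).val = (1 / ((x.1 : ℝ) + 1) ^ 6) * G x.2.val := by
  obtain ⟨g, ⟨⟨b, d⟩, hb, hd, hco⟩⟩ := x
  unfold G eg
  simp only [Equiv.coe_fn_mk]
  have hbR : (0:ℝ) < (b : ℝ) := by exact_mod_cast hb
  have hdR : (0:ℝ) < (d : ℝ) := by exact_mod_cast hd
  have hgR : (0:ℝ) < (g : ℝ) + 1 := by positivity
  push_cast
  field_simp

lemma factor_eq : (∑' q : {p : ℕ × ℕ // 0 < p.1 ∧ 0 < p.2}, G q.val)
    = zr 6 * ∑' q : {p : ℕ × ℕ // 0 < p.1 ∧ 0 < p.2 ∧ Nat.gcd p.1 p.2 = 1}, G q.val := by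
  rw [← eg.tsum_eq (fun q => G q.val)]
  have hsum : Summable (fun x : ℕ × {p : ℕ × ℕ // 0 < p.1 ∧ 0 < p.2 ∧ Nat.gcd p.1 p.2 = 1} =>
      (1 / ((x.1 : ℝ) + 1) ^ 6) * G x.2.val) := by
    apply Summable.mul_of_nonneg (summable_zr (k := 6) (by norm_num)) summable_G_cop
      (fun n => by positivity)
    intro q
    unfold G
    positivity
  have h1 : (∑' x : ℕ × {p : ℕ × ℕ // 0 < p.1 ∧ 0 < p.2 ∧ Nat.gcd p.1 p.2 = 1},
      G (eg x).val) = ∑' x : ℕ × {p : ℕ × ℕ // 0 < p.1 ∧ 0 < p.2 ∧ Nat.gcd p.1 p.2 = 1},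
      (1 / ((x.1 : ℝ) + 1) ^ 6) * G x.2.val := tsum_congr G_eg
  rw [h1, Summable.tsum_prod hsum]
  simp_rw [tsum_mul_left]
  rw [tsum_mul_right]
  rfl

theorem stmt5 :
    ((∑' p : {p : ℕ × ℕ // 0 < p.1 ∧ 0 < p.2},
        (1 : ℝ) / ((p.1.1 : ℝ) ^ 2 * (p.1.2 : ℝ) ^ 2 * ((p.1.1 : ℝ) + p.1.2) ^ 2) : ℝ) : ℂ)
      = riemannZeta 6 *
        ((∑' p : {p : ℕ × ℕ // 0 < p.1 ∧ 0 < p.2 ∧ Nat.gcd p.1 p.2 = 1},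
          (1 : ℝ) / ((p.1.1 : ℝ) ^ 2 * (p.1.2 : ℝ) ^ 2 * ((p.1.1 : ℝ) + p.1.2) ^ 2) : ℝ) : ℂ)
    ∧ ((∑' p : {p : ℕ × ℕ // 0 < p.1 ∧ 0 < p.2},
        (1 : ℝ) / ((p.1.1 : ℝ) ^ 2 * (p.1.2 : ℝ) ^ 2 * ((p.1.1 : ℝ) + p.1.2) ^ 2) : ℝ) : ℂ)
      = riemannZeta 6 / 3 := by
  have hfun1 : (∑' p : {p : ℕ × ℕ // 0 < p.1 ∧ 0 < p.2},
      (1 : ℝ) / ((p.1.1 : ℝ) ^ 2 * (p.1.2 : ℝ) ^ 2 * ((p.1.1 : ℝ) + p.1.2) ^ 2))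
      = ∑' q : {p : ℕ × ℕ // 0 < p.1 ∧ 0 < p.2}, G q.val := tsum_congr fun q => rfl
  have hfun2 : (∑' p : {p : ℕ × ℕ // 0 < p.1 ∧ 0 < p.2 ∧ Nat.gcd p.1 p.2 = 1},
      (1 : ℝ) / ((p.1.1 : ℝ) ^ 2 * (p.1.2 : ℝ) ^ 2 * ((p.1.1 : ℝ) + p.1.2) ^ 2))
      = ∑' q : {p : ℕ × ℕ // 0 < p.1 ∧ 0 < p.2 ∧ Nat.gcd p.1 p.2 = 1}, G q.val :=
    tsum_congr fun q => rfl
  have eS : (∑' p : {p : ℕ × ℕ // 0 < p.1 ∧ 0 < p.2},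
      (1 : ℝ) / ((p.1.1 : ℝ) ^ 2 * (p.1.2 : ℝ) ^ 2 * ((p.1.1 : ℝ) + p.1.2) ^ 2)) = zr 6 / 3 :=
    hfun1.trans (tsum_Pos.trans S_val)
  constructor
  · have efac : (∑' p : {p : ℕ × ℕ // 0 < p.1 ∧ 0 < p.2},
        (1 : ℝ) / ((p.1.1 : ℝ) ^ 2 * (p.1.2 : ℝ) ^ 2 * ((p.1.1 : ℝ) + p.1.2) ^ 2))
        = zr 6 * ∑' p : {p : ℕ × ℕ // 0 < p.1 ∧ 0 < p.2 ∧ Nat.gcd p.1 p.2 = 1},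
          (1 : ℝ) / ((p.1.1 : ℝ) ^ 2 * (p.1.2 : ℝ) ^ 2 * ((p.1.1 : ℝ) + p.1.2) ^ 2) := by
      rw [hfun1, hfun2, factor_eq]
    rw [efac, Complex.ofReal_mul, zeta_six_eq]
  · rw [eS, zeta_six_eq, Complex.ofReal_div]
    norm_num
end

section
/- Let A = {(x,y) : x,y ∈ ℤ²_{≥0}, det(x,y) = 1}, the set of pairs of lattice vectors in the closed first quadrant spanning a parallelogram of oriented area 1. Then 4 · Σ_{(x,y)∈A} 1/(|x|²·|y|²·|x+y|²) = π. -/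
open Real Filter

namespace SB

abbrev P := (ℤ × ℤ) × (ℤ × ℤ)

def Good (p : P) : Prop :=
  0 ≤ p.1.1 ∧ 0 ≤ p.1.2 ∧ 0 ≤ p.2.1 ∧ 0 ≤ p.2.2 ∧ p.1.1 * p.2.2 - p.1.2 * p.2.1 = 1

def root : P := ((1,0),(0,1))

def stp (b : Bool) (p : P) : P :=
  if b then ((p.1.1 + p.2.1, p.1.2 + p.2.2), p.2)
  else (p.1, (p.1.1 + p.2.1, p.1.2 + p.2.2))

def N : List Bool → P
  | [] => root
  | b :: l => stp b (N l)

lemma good_root : Good root := by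
  simp [Good, root]

lemma good_stp {p : P} (b : Bool) (h : Good p) : Good (stp b p) := by
  obtain ⟨⟨x1,x2⟩,⟨y1,y2⟩⟩ := p
  obtain ⟨h1,h2,h3,h4,h5⟩ := h
  simp only [Good, stp] at *
  cases b <;> simp only [Bool.false_eq_true, if_true, if_false] <;>
    refine ⟨by omega, by omega, by omega, by omega, by linear_combination h5⟩

lemma good_N (l : List Bool) : Good (N l) := by
  induction l with
  | nil => exact good_root
  | cons b l ih => exact good_stp b ih

lemma good_pos {p : P} (h : Good p) : 1 ≤ p.1.1 + p.1.2 ∧ 1 ≤ p.2.1 + p.2.2 := by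
  obtain ⟨⟨x1,x2⟩,⟨y1,y2⟩⟩ := p
  obtain ⟨h1,h2,h3,h4,h5⟩ := h
  simp only at *
  constructor
  · by_contra hc
    have hx1 : x1 = 0 := by omega
    have hx2 : x2 = 0 := by omega
    subst hx1; subst hx2; simp at h5
  · by_contra hc
    have hy1 : y1 = 0 := by omega
    have hy2 : y2 = 0 := by omega
    subst hy1; subst hy2; simp at h5

lemma sum_N (l : List Bool) :
    (l.length : ℤ) + 2 ≤ (N l).1.1 + (N l).1.2 + (N l).2.1 + (N l).2.2 := by
  induction l with
  | nil => simp [N, root]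
  | cons b l ih =>
    have hg := good_pos (good_N l)
    cases b <;> simp only [N, stp, List.length_cons, if_true, if_false,
      Bool.false_eq_true] <;> push_cast <;> omega

lemma stp_ne_root {p : P} (b : Bool) (h : Good p) : stp b p ≠ root := by
  obtain ⟨⟨x1,x2⟩,⟨y1,y2⟩⟩ := p
  obtain ⟨h1,h2,h3,h4,h5⟩ := h
  simp only at *
  intro hc
  cases b <;> simp only [stp, root, if_true, if_false, Bool.false_eq_true,
    Prod.mk.injEq] at hc <;> omega

lemma stp_false_ne_true {p q : P} (hp : Good p) (hq : Good q) :
    stp false p ≠ stp true q := by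
  obtain ⟨⟨x1,x2⟩,⟨y1,y2⟩⟩ := p
  obtain ⟨⟨a1,a2⟩,⟨b1,b2⟩⟩ := q
  obtain ⟨h1,h2,h3,h4,h5⟩ := hp
  obtain ⟨g1,g2,g3,g4,g5⟩ := hq
  simp only at *
  intro hc
  simp only [stp, if_true, if_false, Bool.false_eq_true, Prod.mk.injEq] at hc
  obtain ⟨⟨e1,e2⟩,⟨e3,e4⟩⟩ := hc
  have ha1 : a1 = 0 := by omega
  have ha2 : a2 = 0 := by omega
  rw [ha1, ha2] at g5; simp at g5

lemma stp_injective (b : Bool) {p q : P} (h : stp b p = stp b q) : p = q := by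
  obtain ⟨⟨x1,x2⟩,⟨y1,y2⟩⟩ := p
  obtain ⟨⟨a1,a2⟩,⟨b1,b2⟩⟩ := q
  cases b <;> simp only [stp, if_true, if_false, Bool.false_eq_true,
    Prod.mk.injEq] at h <;>
  · obtain ⟨⟨e1,e2⟩,⟨e3,e4⟩⟩ := h
    simp only [Prod.mk.injEq]
    omega

lemma N_inj : Function.Injective N := by
  intro l1
  induction l1 with
  | nil =>
    intro l2 h
    cases l2 with
    | nil => rfl
    | cons b l => exact absurd h.symm (stp_ne_root b (good_N l))
  | cons b l ih =>
    intro l2 h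
    cases l2 with
    | nil => exact absurd h (stp_ne_root b (good_N l))
    | cons b2 l2 =>
      have hgl := good_N l
      have hgl2 := good_N l2
      cases b <;> cases b2
      · rw [ih (stp_injective false h)]
      · exact absurd h (stp_false_ne_true hgl hgl2)
      · exact absurd h.symm (stp_false_ne_true hgl2 hgl)
      · rw [ih (stp_injective true h)]


lemma trichotomy {p : P} (h : Good p) :
    p = root ∨ (p.1.1 ≤ p.2.1 ∧ p.1.2 ≤ p.2.2) ∨ (p.2.1 ≤ p.1.1 ∧ p.2.2 ≤ p.1.2) := by
  obtain ⟨⟨x1,x2⟩,⟨y1,y2⟩⟩ := p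
  obtain ⟨h1,h2,h3,h4,h5⟩ := h
  simp only [root, Prod.mk.injEq] at *
  rcases le_or_gt x1 y1 with ha | ha <;> rcases le_or_gt x2 y2 with hb | hb
  · exact Or.inr (Or.inl ⟨ha, hb⟩)
  · -- x1 ≤ y1, y2 < x2 : impossible
    exfalso
    nlinarith [mul_le_mul_of_nonneg_right ha h4, mul_le_mul_of_nonneg_right (by omega : y2 + 1 ≤ x2) h3]
  · -- y1 < x1, x2 ≤ y2
    rcases eq_or_lt_of_le hb with hb' | hb'
    · exact Or.inr (Or.inr ⟨by omega, by omega⟩)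
    · left
      have key : y1 + x2 + 1 ≤ x1 * y2 - x2 * y1 := by
        nlinarith [mul_le_mul_of_nonneg_right (by omega : y1 + 1 ≤ x1) (by omega : (0:ℤ) ≤ x2 + 1)]
      have hy1 : y1 = 0 := by omega
      have hx2 : x2 = 0 := by omega
      rw [hy1, hx2] at h5
      simp only [mul_zero, zero_mul, sub_zero] at h5
      have hx1 : x1 = 1 := by nlinarith
      have hy2 : y2 = 1 := by nlinarith
      exact ⟨⟨hx1, hx2⟩, hy1, hy2⟩
  · exact Or.inr (Or.inr ⟨by omega, by omega⟩)

lemma N_surj_aux : ∀ (n : ℕ) (p : P), Good p →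
    (p.1.1 + p.1.2 + p.2.1 + p.2.2).toNat ≤ n → ∃ l, N l = p := by
  intro n
  induction n with
  | zero =>
    intro p hp hs
    exfalso
    have h1 := good_pos hp
    omega
  | succ n ih =>
    intro p hp hs
    rcases trichotomy hp with hr | ⟨ha, hb⟩ | ⟨ha, hb⟩
    · exact ⟨[], hr.symm⟩
    · -- x ≤ y componentwise: p = stp false (x, y - x)
      obtain ⟨⟨x1,x2⟩,⟨y1,y2⟩⟩ := p
      obtain ⟨h1,h2,h3,h4,h5⟩ := hp
      simp only at *
      have hq : Good ((x1,x2),(y1-x1,y2-x2)) :=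
        ⟨h1, h2, by dsimp only; omega, by dsimp only; omega, by dsimp only; linear_combination h5⟩
      have hx : 1 ≤ x1 + x2 := (good_pos hq).1
      obtain ⟨l, hl⟩ := ih ((x1,x2),(y1-x1,y2-x2)) hq (by dsimp only; omega)
      refine ⟨false :: l, ?_⟩
      rw [show N (false :: l) = stp false (N l) from rfl, hl]
      show ((x1,x2),(x1 + (y1-x1), x2 + (y2-x2))) = ((x1,x2),(y1,y2))
      norm_num
    · obtain ⟨⟨x1,x2⟩,⟨y1,y2⟩⟩ := p
      obtain ⟨h1,h2,h3,h4,h5⟩ := hp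
      simp only at *
      have hq : Good ((x1-y1,x2-y2),(y1,y2)) :=
        ⟨by dsimp only; omega, by dsimp only; omega, h3, h4, by dsimp only; linear_combination h5⟩
      have hy : 1 ≤ y1 + y2 := (good_pos hq).2
      obtain ⟨l, hl⟩ := ih ((x1-y1,x2-y2),(y1,y2)) hq (by dsimp only; omega)
      refine ⟨true :: l, ?_⟩
      rw [show N (true :: l) = stp true (N l) from rfl, hl]
      show (((x1-y1) + y1, (x2-y2) + y2),(y1,y2)) = ((x1,x2),(y1,y2))
      norm_num

lemma N_surj {p : P} (hp : Good p) : ∃ l, N l = p :=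
  N_surj_aux (p.1.1 + p.1.2 + p.2.1 + p.2.2).toNat p hp le_rfl


def zx (p : P) : ℂ := ⟨(p.1.1 : ℝ), (p.1.2 : ℝ)⟩
def zy (p : P) : ℂ := ⟨(p.2.1 : ℝ), (p.2.2 : ℝ)⟩
noncomputable def th (p : P) : ℝ := (zy p).arg - (zx p).arg
noncomputable def ar (p : P) : ℝ := (p.1.1:ℝ)^2 + (p.1.2:ℝ)^2
noncomputable def br (p : P) : ℝ := (p.2.1:ℝ)^2 + (p.2.2:ℝ)^2
noncomputable def cr (p : P) : ℝ :=
  ((p.1.1:ℝ)+(p.2.1:ℝ))^2 + ((p.1.2:ℝ)+(p.2.2:ℝ))^2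
noncomputable def mr (p : P) : ℝ := (p.1.1:ℝ)*(p.2.1:ℝ) + (p.1.2:ℝ)*(p.2.2:ℝ)
noncomputable def Hf (p : P) : ℝ := Real.sin (th p) * Real.cos (th p)
noncomputable def g (p : P) : ℝ := 1/(ar p * br p * cr p)

lemma int_le_sq {a : ℤ} (h : 0 ≤ a) : a ≤ a^2 := by
  rcases eq_or_lt_of_le h with h'|h'
  · simp [← h']
  · nlinarith

lemma one_le_ar {p : P} (h : Good p) : 1 ≤ ar p := by
  have h1 := h.1; have h2 := h.2.1
  have hs := (good_pos h).1
  have : (1:ℤ) ≤ p.1.1^2 + p.1.2^2 := by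
    have := int_le_sq h1; have := int_le_sq h2; omega
  simp only [ar]
  exact_mod_cast this

lemma one_le_br {p : P} (h : Good p) : 1 ≤ br p := by
  have h1 := h.2.2.1; have h2 := h.2.2.2.1
  have hs := (good_pos h).2
  have : (1:ℤ) ≤ p.2.1^2 + p.2.2^2 := by
    have := int_le_sq h1; have := int_le_sq h2; omega
  simp only [br]
  exact_mod_cast this

lemma one_le_cr {p : P} (h : Good p) : 1 ≤ cr p := by
  have := one_le_br (good_stp false h)
  simp only [br, stp, if_false, Bool.false_eq_true] at this
  push_cast at this
  simpa [cr] using this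

lemma detR {p : P} (h : Good p) :
    (p.1.1:ℝ)*(p.2.2:ℝ) - (p.1.2:ℝ)*(p.2.1:ℝ) = 1 := by
  exact_mod_cast congrArg (fun n : ℤ => (n:ℝ)) h.2.2.2.2

lemma ab_sub_m {p : P} (h : Good p) : ar p * br p - mr p ^ 2 = 1 := by
  have hd := detR h
  simp only [ar, br, mr]
  linear_combination ((p.1.1:ℝ)*(p.2.2:ℝ) - (p.1.2:ℝ)*(p.2.1:ℝ) + 1) * hd

lemma cr_eq {p : P} : cr p = ar p + br p + 2 * mr p := by
  simp only [ar, br, cr, mr]; ring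

lemma sq_abs_zx (p : P) : ‖zx p‖ ^ 2 = ar p := by
  rw [Complex.sq_norm]
  simp [Complex.normSq_apply, zx, ar]; ring

lemma sq_abs_zy (p : P) : ‖zy p‖ ^ 2 = br p := by
  rw [Complex.sq_norm]
  simp [Complex.normSq_apply, zy, br]; ring

lemma abs_zx_pos {p : P} (h : Good p) : 0 < ‖zx p‖ := by
  have := one_le_ar h
  rw [← sq_abs_zx] at this
  nlinarith [norm_nonneg (zx p)]

lemma abs_zy_pos {p : P} (h : Good p) : 0 < ‖zy p‖ := by
  have := one_le_br h
  rw [← sq_abs_zy] at this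
  nlinarith [norm_nonneg (zy p)]

lemma zx_ne_zero {p : P} (h : Good p) : zx p ≠ 0 := by
  intro hc
  have := abs_zx_pos h
  rw [hc] at this; simp at this

lemma zy_ne_zero {p : P} (h : Good p) : zy p ≠ 0 := by
  intro hc
  have := abs_zy_pos h
  rw [hc] at this; simp at this

lemma sin_th {p : P} (h : Good p) :
    Real.sin (th p) = 1 / (‖zx p‖ * ‖zy p‖) := by
  have hA := abs_zx_pos h
  have hB := abs_zy_pos h
  have hd := detR h
  rw [th, Real.sin_sub, Complex.sin_arg, Complex.sin_arg,
    Complex.cos_arg (zx_ne_zero h), Complex.cos_arg (zy_ne_zero h)]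
  have hre1 : (zx p).re = (p.1.1:ℝ) := rfl
  have him1 : (zx p).im = (p.1.2:ℝ) := rfl
  have hre2 : (zy p).re = (p.2.1:ℝ) := rfl
  have him2 : (zy p).im = (p.2.2:ℝ) := rfl
  rw [hre1, him1, hre2, him2]
  field_simp
  linear_combination hd

lemma cos_th {p : P} (h : Good p) :
    Real.cos (th p) = mr p / (‖zx p‖ * ‖zy p‖) := by
  have hA := abs_zx_pos h
  have hB := abs_zy_pos h
  rw [th, Real.cos_sub, Complex.sin_arg, Complex.sin_arg,
    Complex.cos_arg (zx_ne_zero h), Complex.cos_arg (zy_ne_zero h)]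
  have hre1 : (zx p).re = (p.1.1:ℝ) := rfl
  have him1 : (zx p).im = (p.1.2:ℝ) := rfl
  have hre2 : (zy p).re = (p.2.1:ℝ) := rfl
  have him2 : (zy p).im = (p.2.2:ℝ) := rfl
  rw [hre1, him1, hre2, him2]
  simp only [mr]
  rw [div_mul_div_comm, div_mul_div_comm, ← add_div,
    mul_comm (‖zy p‖)]
  ring

lemma Hf_eq {p : P} (h : Good p) : Hf p = mr p / (ar p * br p) := by
  have hA := abs_zx_pos h
  have hB := abs_zy_pos h
  rw [Hf, sin_th h, cos_th h]
  have hAB : (‖zx p‖ * ‖zy p‖) *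
      (‖zx p‖ * ‖zy p‖) = ar p * br p := by
    rw [← sq_abs_zx p, ← sq_abs_zy p]; ring
  rw [div_mul_div_comm, one_mul, hAB]

lemma sin_th_pos {p : P} (h : Good p) : 0 < Real.sin (th p) := by
  rw [sin_th h]
  exact div_pos one_pos (mul_pos (abs_zx_pos h) (abs_zy_pos h))

lemma arg_zx_mem {p : P} (h : Good p) :
    0 ≤ (zx p).arg ∧ (zx p).arg ≤ π/2 := by
  constructor
  · rw [Complex.arg_nonneg_iff]
    show (0:ℝ) ≤ ((p.1.2 : ℤ) : ℝ)
    exact_mod_cast h.2.1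
  · rw [Complex.arg_le_pi_div_two_iff]
    left
    show (0:ℝ) ≤ ((p.1.1 : ℤ) : ℝ)
    exact_mod_cast h.1

lemma arg_zy_mem {p : P} (h : Good p) :
    0 ≤ (zy p).arg ∧ (zy p).arg ≤ π/2 := by
  constructor
  · rw [Complex.arg_nonneg_iff]
    show (0:ℝ) ≤ ((p.2.2 : ℤ) : ℝ)
    exact_mod_cast h.2.2.2.1
  · rw [Complex.arg_le_pi_div_two_iff]
    left
    show (0:ℝ) ≤ ((p.2.1 : ℤ) : ℝ)
    exact_mod_cast h.2.2.1

lemma th_le {p : P} (h : Good p) : th p ≤ π/2 := by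
  have h1 := (arg_zx_mem h).1
  have h2 := (arg_zy_mem h).2
  rw [th]; linarith

lemma th_pos {p : P} (h : Good p) : 0 < th p := by
  by_contra hc
  push_neg at hc
  have h1 := (arg_zx_mem h).2
  have h2 := (arg_zy_mem h).1
  have hge : -(π/2) ≤ th p := by rw [th]; linarith
  have : Real.sin (th p) ≤ 0 := by
    have hs : 0 ≤ Real.sin (-th p) :=
      Real.sin_nonneg_of_nonneg_of_le_pi (by linarith) (by nlinarith [Real.pi_pos])
    rw [Real.sin_neg] at hs
    linarith
  exact absurd (sin_th_pos h) (not_lt.2 this)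

lemma Hf_le_th {p : P} (h : Good p) : Hf p ≤ th p := by
  have := Real.sin_le (by linarith [th_pos h] : 0 ≤ 2 * th p)
  rw [Real.sin_two_mul] at this
  rw [Hf]
  linarith

-- child relations
lemma zx_stp_false (p : P) : zx (stp false p) = zx p := rfl
lemma zy_stp_true (p : P) : zy (stp true p) = zy p := rfl

lemma zy_stp_false (p : P) : zy (stp false p) = zx p + zy p := by
  apply Complex.ext <;> simp [zy, zx, stp, Complex.add_re, Complex.add_im] <;> push_cast <;> ring

lemma zx_stp_true (p : P) : zx (stp true p) = zx p + zy p := by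
  apply Complex.ext <;> simp [zy, zx, stp, Complex.add_re, Complex.add_im] <;> push_cast <;> ring

lemma th_split (p : P) : th (stp false p) + th (stp true p) = th p := by
  simp only [th, zx_stp_false, zy_stp_true, zy_stp_false, zx_stp_true]
  ring

lemma ar_stp_false (p : P) : ar (stp false p) = ar p := rfl
lemma br_stp_true (p : P) : br (stp true p) = br p := rfl

lemma br_stp_false (p : P) : br (stp false p) = cr p := by
  simp only [br, cr, stp, if_false, Bool.false_eq_true]
  push_cast; ring

lemma ar_stp_true (p : P) : ar (stp true p) = cr p := by
  simp only [ar, cr, stp, if_true]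
  push_cast; ring

lemma mr_stp_false (p : P) : mr (stp false p) = ar p + mr p := by
  simp only [mr, ar, stp, if_false, Bool.false_eq_true]
  push_cast; ring

lemma mr_stp_true (p : P) : mr (stp true p) = mr p + br p := by
  simp only [mr, br, stp, if_true]
  push_cast; ring

lemma alg (a b m : ℝ) (ha : a ≠ 0) (hb : b ≠ 0) (hc : a+b+2*m ≠ 0)
    (hd : a*b - m^2 = 1) :
    (a+m)/(a*(a+b+2*m)) + (m+b)/((a+b+2*m)*b) - m/(a*b)
      = 2*(1/(a*b*(a+b+2*m))) := by
  have key : (a+m)/(a*(a+b+2*m)) + (m+b)/((a+b+2*m)*b) - m/(a*b)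
      - 2*(1/(a*b*(a+b+2*m))) = 2*(a*b - m^2 - 1) / (a*b*(a+b+2*m)) := by
    obtain ⟨c, hc2⟩ : ∃ c, c = a+b+2*m := ⟨_, rfl⟩
    rw [← hc2] at hc ⊢
    field_simp
    rw [hc2]
    ring
  have : (2:ℝ)*(a*b - m^2 - 1) = 0 := by rw [hd]; ring
  rw [this, zero_div] at key
  linarith

lemma node_identity {p : P} (h : Good p) :
    Hf (stp false p) + Hf (stp true p) - Hf p = 2 * g p := by
  have h0 := Hf_eq h
  have h1 := Hf_eq (good_stp false h)
  have h2 := Hf_eq (good_stp true h)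
  rw [ar_stp_false, br_stp_false, mr_stp_false] at h1
  rw [ar_stp_true, br_stp_true, mr_stp_true] at h2
  have ha := one_le_ar h
  have hb := one_le_br h
  have hc := one_le_cr h
  have hd := ab_sub_m h
  rw [h0, h1, h2]
  simp only [g]
  rw [cr_eq] at hc ⊢
  exact alg (ar p) (br p) (mr p) (by linarith) (by linarith) (by linarith) hd



lemma AB_ge (l : List Bool) :
    ((l.length:ℝ) + 1)/2 ≤ ‖zx (N l)‖ * ‖zy (N l)‖ := by
  set p := N l with hp
  have hg : Good p := good_N l
  have h1 : (1:ℝ) ≤ (p.1.1:ℝ) + (p.1.2:ℝ) := by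
    have := (good_pos hg).1; push_cast [← Int.cast_add]; exact_mod_cast this
  have h2 : (1:ℝ) ≤ (p.2.1:ℝ) + (p.2.2:ℝ) := by
    have := (good_pos hg).2; exact_mod_cast this
  have hsum : (l.length:ℝ) + 2 ≤ (p.1.1:ℝ) + (p.1.2:ℝ) + (p.2.1:ℝ) + (p.2.2:ℝ) := by
    have := sum_N l; rw [← hp] at this; exact_mod_cast this
  have har : ((p.1.1:ℝ)+(p.1.2:ℝ))^2/2 ≤ ar p := by
    simp only [ar]; nlinarith [sq_nonneg ((p.1.1:ℝ) - (p.1.2:ℝ))]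
  have hbr : ((p.2.1:ℝ)+(p.2.2:ℝ))^2/2 ≤ br p := by
    simp only [br]; nlinarith [sq_nonneg ((p.2.1:ℝ) - (p.2.2:ℝ))]
  have hprod : (l.length:ℝ) + 1 ≤ ((p.1.1:ℝ)+(p.1.2:ℝ)) * ((p.2.1:ℝ)+(p.2.2:ℝ)) := by
    nlinarith
  have harbr : (((l.length:ℝ)+1)/2)^2 ≤ ar p * br p := by
    nlinarith [sq_nonneg ((p.1.1:ℝ)+(p.1.2:ℝ)), sq_nonneg ((p.2.1:ℝ)+(p.2.2:ℝ)),
      mul_le_mul har hbr (by positivity) (by nlinarith)]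
  have hA := abs_zx_pos hg
  have hB := abs_zy_pos hg
  have hL : (0:ℝ) ≤ ((l.length:ℝ)+1)/2 := by positivity
  nlinarith [sq_abs_zx p, sq_abs_zy p, mul_pos hA hB]

lemma sin_th_le (l : List Bool) :
    Real.sin (th (N l)) ≤ 2 / ((l.length:ℝ) + 1) := by
  have hg : Good (N l) := good_N l
  have hAB := AB_ge l
  have hL : (0:ℝ) < ((l.length:ℝ)+1)/2 := by positivity
  rw [sin_th hg]
  calc 1 / (‖zx (N l)‖ * ‖zy (N l)‖)
      ≤ 1 / (((l.length:ℝ) + 1)/2) := by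
        apply one_div_le_one_div_of_le hL hAB
    _ = 2 / ((l.length:ℝ) + 1) := by rw [one_div_div]

lemma th_small {l : List Bool} (hl : 9 ≤ l.length) :
    th (N l) ≤ 3 / ((l.length:ℝ) + 1) ∧ th (N l) ≤ 1/2 := by
  have hg : Good (N l) := good_N l
  have ht0 := th_pos hg
  have ht2 := th_le hg
  have hsin := sin_th_le l
  have hL : (10:ℝ) ≤ (l.length:ℝ) + 1 := by
    have : (9:ℝ) ≤ (l.length:ℝ) := by exact_mod_cast hl
    linarith
  have hsin5 : Real.sin (th (N l)) ≤ 1/5 := by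
    have : 2 / ((l.length:ℝ) + 1) ≤ 2/10 := by
      apply div_le_div_of_nonneg_left (by norm_num) (by norm_num) hL
    linarith
  have hhalf : Real.sin (1/2 : ℝ) > 15/32 := by
    have := Real.sin_gt_sub_cube (by norm_num : (0:ℝ) < 1/2)
    norm_num at this ⊢
    linarith
  have hth_half : th (N l) ≤ 1/2 := by
    by_contra hc
    push_neg at hc
    have hpi : (1:ℝ)/2 < π/2 := by
      have := Real.pi_gt_three; linarith
    have hmono := Real.strictMonoOn_sin
      (Set.mem_Icc.2 ⟨by linarith, le_of_lt hpi⟩)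
      (Set.mem_Icc.2 ⟨by linarith, ht2⟩) hc
    linarith
  refine ⟨?_, hth_half⟩
  have hcube := Real.sin_gt_sub_cube ht0
  have hsq : th (N l)^2 ≤ 1/4 := by nlinarith
  have hth3 : th (N l)^3 ≤ th (N l)/4 := by
    nlinarith [mul_le_mul_of_nonneg_left hsq (le_of_lt ht0)]
  have hLpos : (0:ℝ) < (l.length:ℝ)+1 := by linarith
  have h15 : (15/16) * th (N l) ≤ 2/((l.length:ℝ)+1) := by linarith
  rw [le_div_iff₀ hLpos]
  have h16 := (le_div_iff₀ hLpos).1 h15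
  nlinarith

lemma err_bound {l : List Bool} (hl : 9 ≤ l.length) :
    th (N l) - Hf (N l) ≤ (3 / ((l.length:ℝ) + 1))^2 * th (N l) := by
  have hg : Good (N l) := good_N l
  have ht0 := th_pos hg
  obtain ⟨h3, hhalf⟩ := th_small hl
  have h2t : 0 < 2 * th (N l) := by linarith
  have hcube := Real.sin_gt_sub_cube h2t
  have hHf : Hf (N l) = Real.sin (2 * th (N l)) / 2 := by
    rw [Real.sin_two_mul, Hf]; ring
  have key : th (N l) - Hf (N l) ≤ th (N l)^3 := by
    rw [hHf]; nlinarith [pow_pos ht0 3]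
  have hq : (0:ℝ) ≤ 3 / ((l.length:ℝ) + 1) := by positivity
  have hsq : th (N l)^2 ≤ (3 / ((l.length:ℝ) + 1))^2 := by
    nlinarith [mul_le_mul h3 h3 (le_of_lt ht0) hq]
  have : th (N l)^3 ≤ (3 / ((l.length:ℝ) + 1))^2 * th (N l) := by
    nlinarith [mul_le_mul_of_nonneg_right hsq (le_of_lt ht0)]
  linarith

-- level sets
def Lev : ℕ → Finset (List Bool)
  | 0 => {[]}
  | n+1 => (Lev n).image (List.cons false) ∪ (Lev n).image (List.cons true)

lemma mem_Lev {n : ℕ} {l : List Bool} : l ∈ Lev n ↔ l.length = n := by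
  induction n generalizing l with
  | zero =>
    simp [Lev, List.length_eq_zero_iff]
  | succ n ih =>
    simp only [Lev, Finset.mem_union, Finset.mem_image]
    cases l with
    | nil => simp
    | cons b l' =>
      cases b <;> simp [ih] <;> omega

lemma sum_Lev_succ (F : List Bool → ℝ) (n : ℕ) :
    ∑ l ∈ Lev (n+1), F l = ∑ l ∈ Lev n, (F (false :: l) + F (true :: l)) := by
  have hdisj : Disjoint ((Lev n).image (List.cons false)) ((Lev n).image (List.cons true)) := by
    rw [Finset.disjoint_left]
    rintro a ha hb
    obtain ⟨x, -, hx⟩ := Finset.mem_image.1 ha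
    obtain ⟨y, -, hy⟩ := Finset.mem_image.1 hb
    rw [← hx] at hy
    exact absurd (List.head_eq_of_cons_eq hy) (by simp)
  have hinjf : Set.InjOn (List.cons false) (Lev n) := fun a _ b _ h => by injection h
  have hinjt : Set.InjOn (List.cons true) (Lev n) := fun a _ b _ h => by injection h
  rw [show Lev (n+1) = (Lev n).image (List.cons false) ∪ (Lev n).image (List.cons true) from rfl,
    Finset.sum_union hdisj, Finset.sum_image hinjf, Finset.sum_image hinjt,
    ← Finset.sum_add_distrib]

lemma th_root : th root = π/2 := by
  have hzx : zx root = 1 := by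
    apply Complex.ext <;> simp [zx, root]
  have hzy : zy root = Complex.I := by
    apply Complex.ext <;> simp [zy, root]
  rw [th, hzx, hzy, Complex.arg_I, Complex.arg_one, sub_zero]

lemma Hf_root : Hf root = 0 := by
  rw [Hf, th_root, Real.cos_pi_div_two, mul_zero]

lemma sum_th_Lev (n : ℕ) : ∑ l ∈ Lev n, th (N l) = π/2 := by
  induction n with
  | zero => simp [Lev, th_root, N]
  | succ n ih =>
    rw [sum_Lev_succ (fun l => th (N l)) n]
    rw [← ih]
    apply Finset.sum_congr rfl
    intro l _
    exact th_split (N l)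

lemma sum_Hf_le (n : ℕ) : ∑ l ∈ Lev n, Hf (N l) ≤ π/2 := by
  rw [← sum_th_Lev n]
  exact Finset.sum_le_sum fun l _ => Hf_le_th (good_N l)

lemma sum_Hf_ge {n : ℕ} (hn : 9 ≤ n) :
    π/2 - (3 / ((n:ℝ) + 1))^2 * (π/2) ≤ ∑ l ∈ Lev n, Hf (N l) := by
  have key : ∑ l ∈ Lev n, (th (N l) - Hf (N l))
      ≤ (3 / ((n:ℝ) + 1))^2 * (π/2) := by
    calc ∑ l ∈ Lev n, (th (N l) - Hf (N l))
        ≤ ∑ l ∈ Lev n, (3 / ((n:ℝ) + 1))^2 * th (N l) := by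
          apply Finset.sum_le_sum
          intro l hl
          have hlen : l.length = n := mem_Lev.1 hl
          have := err_bound (l := l) (by omega)
          rw [hlen] at this
          exact this
      _ = (3 / ((n:ℝ) + 1))^2 * (π/2) := by
          rw [← Finset.mul_sum, sum_th_Lev]
  have hsplit : ∑ l ∈ Lev n, (th (N l) - Hf (N l))
      = π/2 - ∑ l ∈ Lev n, Hf (N l) := by
    rw [Finset.sum_sub_distrib, sum_th_Lev]
  linarith

def Tre : ℕ → Finset (List Bool)
  | 0 => ∅
  | n+1 => Tre n ∪ Lev n

lemma mem_Tre {n : ℕ} {l : List Bool} : l ∈ Tre n ↔ l.length < n := by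
  induction n with
  | zero => simp [Tre]
  | succ n ih =>
    simp only [Tre, Finset.mem_union, ih, mem_Lev]
    omega

lemma sum_g_Lev (n : ℕ) :
    ∑ l ∈ Lev n, g (N l)
      = (∑ l ∈ Lev (n+1), Hf (N l) - ∑ l ∈ Lev n, Hf (N l))/2 := by
  rw [sum_Lev_succ (fun l => Hf (N l)) n]
  rw [← Finset.sum_sub_distrib, Finset.sum_div]
  apply Finset.sum_congr rfl
  intro l _
  have := node_identity (good_N l)
  show g (N l) = (Hf (stp false (N l)) + Hf (stp true (N l)) - Hf (N l))/2
  linarith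

lemma sum_g_Tre (n : ℕ) :
    ∑ l ∈ Tre n, g (N l) = (∑ l ∈ Lev n, Hf (N l))/2 := by
  induction n with
  | zero => simp [Tre, Lev, N, Hf_root]
  | succ n ih =>
    have hdisj : Disjoint (Tre n) (Lev n) := by
      rw [Finset.disjoint_left]
      intro a ha hb
      rw [mem_Tre] at ha
      rw [mem_Lev] at hb
      omega
    rw [show Tre (n+1) = Tre n ∪ Lev n from rfl, Finset.sum_union hdisj, ih,
      sum_g_Lev n]
    ring

lemma g_nonneg (l : List Bool) : 0 ≤ g (N l) := by
  have hg := good_N l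
  have := one_le_ar hg
  have := one_le_br hg
  have := one_le_cr hg
  have h1 : (0:ℝ) < ar (N l) := by linarith
  have h2 : (0:ℝ) < br (N l) := by linarith
  have h3 : (0:ℝ) < cr (N l) := by linarith
  have hpos := mul_pos (mul_pos h1 h2) h3
  simp only [g]
  exact le_of_lt (div_pos one_pos hpos)

lemma tendsto_SHf :
    Tendsto (fun n : ℕ => ∑ l ∈ Lev n, Hf (N l)) atTop (nhds (π/2)) := by
  have hub : Tendsto (fun n : ℕ => (3 / ((n:ℝ) + 1))^2 * (π/2)) atTop (nhds 0) := by
    have h1 : Tendsto (fun n : ℕ => ((n:ℝ) + 1)) atTop atTop :=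
      tendsto_atTop_add_const_right atTop 1 tendsto_natCast_atTop_atTop
    have h2 : Tendsto (fun n : ℕ => 3 / ((n:ℝ) + 1)) atTop (nhds 0) := by
      simpa [div_eq_mul_inv] using h1.inv_tendsto_atTop.const_mul (3:ℝ)
    have h3 := (h2.mul h2).mul_const (π/2)
    have heq : (fun n : ℕ => (3 / ((n:ℝ) + 1))^2 * (π/2))
        = fun n : ℕ => (3 / ((n:ℝ)+1)) * (3/((n:ℝ)+1)) * (π/2) := by
      ext n; ring
    rw [heq]
    simpa using h3
  have hlow : Tendsto (fun n : ℕ => π/2 - (3 / ((n:ℝ) + 1))^2 * (π/2)) atTop (nhds (π/2)) := by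
    have := tendsto_const_nhds (x := π/2) (f := atTop (α := ℕ)) |>.sub hub
    simpa using this
  apply tendsto_of_tendsto_of_tendsto_of_le_of_le' hlow tendsto_const_nhds
  · filter_upwards [eventually_ge_atTop 9] with n hn
    exact sum_Hf_ge hn
  · filter_upwards with n
    exact sum_Hf_le n

lemma hasSum_g : HasSum (fun l : List Bool => g (N l)) (π/4) := by
  have htend : Tendsto (fun n : ℕ => ∑ l ∈ Tre n, g (N l)) atTop (nhds (π/4)) := by
    have := tendsto_SHf.div_const 2
    simp only [sum_g_Tre]
    convert this using 2
    ring
  apply hasSum_of_isLUB_of_nonneg _ g_nonneg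
  constructor
  · rintro v ⟨s, rfl⟩
    set m := (s.sup List.length) + 1 with hm
    have hsub : s ⊆ Tre m := by
      intro l hl
      rw [mem_Tre]
      have := Finset.le_sup (f := List.length) hl
      omega
    calc ∑ l ∈ s, g (N l) ≤ ∑ l ∈ Tre m, g (N l) :=
          Finset.sum_le_sum_of_subset_of_nonneg hsub fun l _ _ => g_nonneg l
      _ = (∑ l ∈ Lev m, Hf (N l))/2 := sum_g_Tre m
      _ ≤ (π/2)/2 := by linarith [sum_Hf_le m]
      _ = π/4 := by ring
  · intro b hb
    apply le_of_tendsto htend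
    filter_upwards with n
    exact hb ⟨Tre n, rfl⟩


noncomputable def eqv : List Bool ≃ {p : P //
    0 ≤ p.1.1 ∧ 0 ≤ p.1.2 ∧ 0 ≤ p.2.1 ∧ 0 ≤ p.2.2 ∧ p.1.1 * p.2.2 - p.1.2 * p.2.1 = 1} :=
  Equiv.ofBijective (fun l => ⟨N l, good_N l⟩)
    ⟨fun l1 l2 h => N_inj (congrArg Subtype.val h),
     fun q => by
      obtain ⟨l, hl⟩ := N_surj (p := q.1) q.2
      exact ⟨l, Subtype.ext hl⟩⟩

end SB

theorem stmt6 :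
    4 * ∑' p : {p : (ℤ × ℤ) × (ℤ × ℤ) //
        0 ≤ p.1.1 ∧ 0 ≤ p.1.2 ∧ 0 ≤ p.2.1 ∧ 0 ≤ p.2.2 ∧
        p.1.1 * p.2.2 - p.1.2 * p.2.1 = 1},
      (1 : ℝ) /
        (((p.1.1.1 : ℝ) ^ 2 + (p.1.1.2 : ℝ) ^ 2) *
         ((p.1.2.1 : ℝ) ^ 2 + (p.1.2.2 : ℝ) ^ 2) *
         (((p.1.1.1 : ℝ) + p.1.2.1) ^ 2 + ((p.1.1.2 : ℝ) + p.1.2.2) ^ 2))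
      = Real.pi := by
  have hsum : HasSum (fun p : {p : (ℤ × ℤ) × (ℤ × ℤ) //
        0 ≤ p.1.1 ∧ 0 ≤ p.1.2 ∧ 0 ≤ p.2.1 ∧ 0 ≤ p.2.2 ∧
        p.1.1 * p.2.2 - p.1.2 * p.2.1 = 1} =>
      (1 : ℝ) /
        (((p.1.1.1 : ℝ) ^ 2 + (p.1.1.2 : ℝ) ^ 2) *
         ((p.1.2.1 : ℝ) ^ 2 + (p.1.2.2 : ℝ) ^ 2) *
         (((p.1.1.1 : ℝ) + p.1.2.1) ^ 2 + ((p.1.1.2 : ℝ) + p.1.2.2) ^ 2)))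
      (Real.pi/4) := by
    rw [← Equiv.hasSum_iff SB.eqv]
    exact SB.hasSum_g
  rw [hsum.tsum_eq]
  ring
end

section
/- Let A = {(x,y) : x,y ∈ ℤ²_{≥0}, det(x,y) = 1}. Then Σ_{(x,y)∈A} (|x| + |y| - |x+y|)/(|x|·|y|·|x+y|) = π/2 - 1. -/
/-!
The pairs in the sum are exactly the nodes of the Stern–Brocot tree: it starts at `(e₁, e₂)` and
the children of `(x, y)` are `(x, x + y)` and `(x + y, y)`. Let `θ` be the angle from `x` to `y`
and `d(x, y) = θ - 1 / (|x| |y|)`; since the angles of the two children add up to `θ`, the summand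
equals `d(x, y) - d(x, x + y) - d(x + y, y)`. Hence the sum over the first `n` levels of the tree
telescopes to `d(e₁, e₂) = π/2 - 1` minus the sum of `d` over level `n`. Unimodularity gives
`sin θ = 1 / (|x| |y|)`, so `0 ≤ d = θ - sin θ ≤ θ³ / 6`; the angles on level `n` add up to `π/2`
and are `O(1/n)`, so this remainder is `O(1/n²)`.
-/

open Real Filter Topology Finset

theorem hasSum_of_monotone_of_tendsto {ι : Type*} {f : ι → ℝ} (hf : 0 ≤ f)
    {s : ℕ → Finset ι} (hs : Monotone s) (hcover : ∀ i, ∃ n, i ∈ s n) {a : ℝ}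
    (h : Tendsto (fun n ↦ ∑ i ∈ s n, f i) atTop (𝓝 a)) : HasSum f a := by
  have hs_top : Tendsto s atTop atTop := tendsto_atTop_finset_of_monotone hs hcover
  have hmono : Monotone fun n ↦ ∑ i ∈ s n, f i := fun m n hmn ↦
    sum_le_sum_of_subset_of_nonneg (hs hmn) fun i _ _ ↦ hf i
  have hle : ∀ n, ∑ i ∈ s n, f i ≤ a := hmono.ge_of_tendsto h
  have hf_sum : Summable f := summable_of_sum_le hf fun t ↦ by
    obtain ⟨n, hn⟩ := (hs_top.eventually_ge_atTop t).exists
    exact (sum_le_sum_of_subset_of_nonneg hn fun i _ _ ↦ hf i).trans (hle n)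
  rw [← tendsto_nhds_unique (hf_sum.hasSum.comp hs_top) h]
  exact hf_sum.hasSum

theorem Complex.sin_arg_sub_arg {z w : ℂ} (hz : z ≠ 0) (hw : w ≠ 0) :
    Real.sin (arg w - arg z) = (z.re * w.im - z.im * w.re) / (‖z‖ * ‖w‖) := by
  have := norm_pos_iff.2 hz
  have := norm_pos_iff.2 hw
  rw [Real.sin_sub, sin_arg, sin_arg, cos_arg hz, cos_arg hw]
  field_simp

noncomputable section

namespace SternBrocot

abbrev Pair := (ℤ × ℤ) × (ℤ × ℤ)

def IsUnimodular (p : Pair) : Prop :=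
  0 ≤ p.1.1 ∧ 0 ≤ p.1.2 ∧ 0 ≤ p.2.1 ∧ 0 ≤ p.2.2 ∧ p.1.1 * p.2.2 - p.1.2 * p.2.1 = 1

def root : Pair := ((1, 0), (0, 1))

def leftChild (p : Pair) : Pair := (p.1, p.1 + p.2)

def rightChild (p : Pair) : Pair := (p.1 + p.2, p.2)

def node : List Bool → Pair
  | [] => root
  | false :: l => leftChild (node l)
  | true :: l => rightChild (node l)

section Unimodular

variable {p q : Pair}

theorem IsUnimodular.fst_pos (hp : IsUnimodular p) : 0 < p.1.1 + p.1.2 := by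
  obtain ⟨h₁, h₂, h₃, h₄, hdet⟩ := hp
  nlinarith

theorem IsUnimodular.snd_pos (hp : IsUnimodular p) : 0 < p.2.1 + p.2.2 := by
  obtain ⟨h₁, h₂, h₃, h₄, hdet⟩ := hp
  nlinarith

theorem isUnimodular_leftChild (hp : IsUnimodular p) : IsUnimodular (leftChild p) := by
  obtain ⟨h₁, h₂, h₃, h₄, hdet⟩ := hp
  refine ⟨h₁, h₂, ?_, ?_, ?_⟩ <;> simp only [leftChild, Prod.fst_add, Prod.snd_add]
  · omega
  · omega
  · linear_combination hdet

theorem isUnimodular_rightChild (hp : IsUnimodular p) : IsUnimodular (rightChild p) := by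
  obtain ⟨h₁, h₂, h₃, h₄, hdet⟩ := hp
  refine ⟨?_, ?_, h₃, h₄, ?_⟩ <;> simp only [rightChild, Prod.fst_add, Prod.snd_add]
  · omega
  · omega
  · linear_combination hdet

theorem isUnimodular_node (l : List Bool) : IsUnimodular (node l) := by
  induction l with
  | nil => exact ⟨by decide, by decide, by decide, by decide, by decide⟩
  | cons b l ih =>
    cases b
    · exact isUnimodular_leftChild ih
    · exact isUnimodular_rightChild ih

theorem leftChild_ne_root (hp : IsUnimodular p) : leftChild p ≠ root := by
  have := hp.2.2.1
  simp only [leftChild, root, ne_eq, Prod.ext_iff, Prod.fst_add, Prod.snd_add]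
  omega

theorem rightChild_ne_root (hp : IsUnimodular p) : rightChild p ≠ root := by
  have := hp.2.1
  simp only [rightChild, root, ne_eq, Prod.ext_iff, Prod.fst_add, Prod.snd_add]
  omega

theorem leftChild_ne_rightChild (hp : IsUnimodular p) (hq : IsUnimodular q) :
    leftChild p ≠ rightChild q := by
  have := hp.snd_pos; have := hp.2.2.1; have := hp.2.2.2.1
  have := hq.fst_pos; have := hq.1; have := hq.2.1
  simp only [leftChild, rightChild, ne_eq, Prod.ext_iff, Prod.fst_add, Prod.snd_add]
  omega

theorem leftChild_injective : Function.Injective leftChild := by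
  intro p q h
  simp only [leftChild, Prod.ext_iff, Prod.fst_add, Prod.snd_add] at h ⊢
  omega

theorem rightChild_injective : Function.Injective rightChild := by
  intro p q h
  simp only [rightChild, Prod.ext_iff, Prod.fst_add, Prod.snd_add] at h ⊢
  omega

theorem node_injective : Function.Injective node := by
  intro l l' h
  induction l generalizing l' with
  | nil =>
    cases l' with
    | nil => rfl
    | cons b l' =>
      cases b
      · exact absurd h.symm (leftChild_ne_root (isUnimodular_node l'))
      · exact absurd h.symm (rightChild_ne_root (isUnimodular_node l'))
  | cons b l ih =>
    cases l' with
    | nil =>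
      cases b
      · exact absurd h (leftChild_ne_root (isUnimodular_node l))
      · exact absurd h (rightChild_ne_root (isUnimodular_node l))
    | cons b' l' =>
      cases b <;> cases b'
      · rw [ih (leftChild_injective h)]
      · exact absurd h (leftChild_ne_rightChild (isUnimodular_node l) (isUnimodular_node l'))
      · exact absurd h.symm (leftChild_ne_rightChild (isUnimodular_node l') (isUnimodular_node l))
      · rw [ih (rightChild_injective h)]

/-- The parent in the Stern–Brocot tree: subtract the smaller vector from the larger one. -/
theorem IsUnimodular.exists_parent (hp : IsUnimodular p) (hroot : p ≠ root) :
    ∃ q, IsUnimodular q ∧ (p = leftChild q ∨ p = rightChild q) ∧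
      q.1.1 + q.1.2 + q.2.1 + q.2.2 < p.1.1 + p.1.2 + p.2.1 + p.2.2 := by
  obtain ⟨⟨a, b⟩, c, d⟩ := p
  obtain ⟨ha, hb, hc, hd, hdet⟩ := hp
  dsimp only at ha hb hc hd hdet ⊢
  rcases le_or_gt a c with hac | hca
  · rcases le_or_gt b d with hbd | hdb
    · exact ⟨((a, b), (c - a, d - b)),
        ⟨ha, hb, sub_nonneg.2 hac, sub_nonneg.2 hbd, by linear_combination hdet⟩,
        Or.inl (by simp [leftChild]), by nlinarith⟩
    · nlinarith [mul_le_mul_of_nonneg_right hac hd, mul_le_mul_of_nonneg_left hdb.le hc]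
  · rcases le_or_gt d b with hdb | hbd
    · exact ⟨((a - c, b - d), (c, d)),
        ⟨sub_nonneg.2 hca.le, sub_nonneg.2 hdb, hc, hd, by linear_combination hdet⟩,
        Or.inr (by simp [rightChild]), by nlinarith⟩
    · -- `(c + 1) * (b + 1) ≤ a * d = 1 + b * c` forces `b = c = 0`, hence the root
      obtain rfl : b = 0 := by nlinarith
      obtain rfl : c = 0 := by nlinarith
      obtain ⟨rfl, rfl⟩ : a = 1 ∧ d = 1 := ⟨by nlinarith, by nlinarith⟩
      exact absurd rfl hroot

theorem exists_node_eq (hp : IsUnimodular p) : ∃ l, node l = p := by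
  induction h : (p.1.1 + p.1.2 + p.2.1 + p.2.2).toNat using Nat.strong_induction_on
    generalizing p with
  | _ n ih =>
  by_cases hroot : p = root
  · exact ⟨[], hroot.symm⟩
  obtain ⟨q, hq, hpq, hlt⟩ := hp.exists_parent hroot
  have := hq.1; have := hq.2.1; have := hq.2.2.1; have := hq.2.2.2.1
  obtain ⟨l, rfl⟩ := ih _ (by omega) hq rfl
  rcases hpq with rfl | rfl
  · exact ⟨false :: l, rfl⟩
  · exact ⟨true :: l, rfl⟩

end Unimodular

def nodeEquiv : List Bool ≃ {p // IsUnimodular p} :=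
  Equiv.ofBijective (fun l ↦ ⟨node l, isUnimodular_node l⟩)
    ⟨fun _ _ h ↦ node_injective (congrArg Subtype.val h),
      fun p ↦ (exists_node_eq p.2).imp fun _ h ↦ Subtype.ext h⟩

theorem length_add_two_le (l : List Bool) :
    (l.length : ℤ) + 2 ≤ (node l).1.1 + (node l).1.2 + (node l).2.1 + (node l).2.2 := by
  induction l with
  | nil => decide
  | cons b l ih =>
    have := (isUnimodular_node l).fst_pos
    have := (isUnimodular_node l).snd_pos
    cases b <;> simp only [node, leftChild, rightChild, Prod.fst_add, Prod.snd_add,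
      List.length_cons] <;> push_cast <;> omega

def toComplex (u : ℤ × ℤ) : ℂ := ⟨u.1, u.2⟩

theorem toComplex_add (u v : ℤ × ℤ) : toComplex (u + v) = toComplex u + toComplex v := by
  simp [toComplex, Complex.ext_iff]

theorem norm_toComplex (u : ℤ × ℤ) : ‖toComplex u‖ = √((u.1 : ℝ) ^ 2 + (u.2 : ℝ) ^ 2) := by
  rw [Complex.norm_def, Complex.normSq_apply]
  simp only [toComplex, sq]

theorem toComplex_ne_zero {u : ℤ × ℤ} (hu : 0 < u.1 + u.2) : toComplex u ≠ 0 := by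
  intro h
  simp only [toComplex, Complex.ext_iff, Complex.zero_re, Complex.zero_im, Int.cast_eq_zero] at h
  omega

theorem add_div_two_le_norm_toComplex (u : ℤ × ℤ) :
    ((u.1 + u.2 : ℤ) : ℝ) / 2 ≤ ‖toComplex u‖ := by
  have := Complex.re_le_norm (toComplex u)
  have := Complex.im_le_norm (toComplex u)
  simp only [toComplex, Int.cast_add] at *
  linarith

theorem add_sub_one_div_four_le_norm_mul_norm {u v : ℤ × ℤ} (hu : 0 < u.1 + u.2)
    (hv : 0 < v.1 + v.2) :
    ((u.1 + u.2 + v.1 + v.2 - 1 : ℤ) : ℝ) / 4 ≤ ‖toComplex u‖ * ‖toComplex v‖ := by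
  have hst : u.1 + u.2 + v.1 + v.2 - 1 ≤ (u.1 + u.2) * (v.1 + v.2) := by nlinarith
  have hst' : ((u.1 + u.2 + v.1 + v.2 - 1 : ℤ) : ℝ) ≤
      ((u.1 + u.2 : ℤ) : ℝ) * ((v.1 + v.2 : ℤ) : ℝ) := by
    exact_mod_cast hst
  have hv' : (0 : ℝ) ≤ ((v.1 + v.2 : ℤ) : ℝ) := by exact_mod_cast hv.le
  calc ((u.1 + u.2 + v.1 + v.2 - 1 : ℤ) : ℝ) / 4
      ≤ ((u.1 + u.2 : ℤ) : ℝ) / 2 * (((v.1 + v.2 : ℤ) : ℝ) / 2) := by linarith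
    _ ≤ ‖toComplex u‖ * ‖toComplex v‖ :=
        mul_le_mul (add_div_two_le_norm_toComplex u) (add_div_two_le_norm_toComplex v)
          (by positivity) (norm_nonneg _)

theorem arg_toComplex_mem_Icc {u : ℤ × ℤ} (h₁ : 0 ≤ u.1) (h₂ : 0 ≤ u.2) :
    Complex.arg (toComplex u) ∈ Set.Icc 0 (π / 2) :=
  ⟨Complex.arg_nonneg_iff.2 (Int.cast_nonneg h₂),
    Complex.arg_le_pi_div_two_iff.2 (Or.inl (Int.cast_nonneg h₁))⟩

variable {p : Pair}

theorem IsUnimodular.norm_fst_pos (hp : IsUnimodular p) : 0 < ‖toComplex p.1‖ :=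
  norm_pos_iff.2 (toComplex_ne_zero hp.fst_pos)

theorem IsUnimodular.norm_snd_pos (hp : IsUnimodular p) : 0 < ‖toComplex p.2‖ :=
  norm_pos_iff.2 (toComplex_ne_zero hp.snd_pos)

def angle (p : Pair) : ℝ := Complex.arg (toComplex p.2) - Complex.arg (toComplex p.1)

def defect (p : Pair) : ℝ := angle p - 1 / (‖toComplex p.1‖ * ‖toComplex p.2‖)

def summand (p : Pair) : ℝ :=
  (‖toComplex p.1‖ + ‖toComplex p.2‖ - ‖toComplex (p.1 + p.2)‖) /
    (‖toComplex p.1‖ * ‖toComplex p.2‖ * ‖toComplex (p.1 + p.2)‖)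

theorem angle_leftChild_add_angle_rightChild (p : Pair) :
    angle (leftChild p) + angle (rightChild p) = angle p := by
  simp only [angle, leftChild, rightChild]
  ring

theorem sin_angle (hp : IsUnimodular p) :
    Real.sin (angle p) = 1 / (‖toComplex p.1‖ * ‖toComplex p.2‖) := by
  rw [angle, Complex.sin_arg_sub_arg (toComplex_ne_zero hp.fst_pos) (toComplex_ne_zero hp.snd_pos)]
  congr 1
  simpa [toComplex] using congrArg (Int.cast : ℤ → ℝ) hp.2.2.2.2

theorem angle_mem_Icc (hp : IsUnimodular p) : angle p ∈ Set.Icc (-(π / 2)) (π / 2) := by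
  have := arg_toComplex_mem_Icc hp.1 hp.2.1
  have := arg_toComplex_mem_Icc hp.2.2.1 hp.2.2.2.1
  simp only [angle, Set.mem_Icc] at *
  constructor <;> linarith

theorem angle_le_pi_div_two (hp : IsUnimodular p) : angle p ≤ π / 2 :=
  (angle_mem_Icc hp).2

theorem angle_pos (hp : IsUnimodular p) : 0 < angle p := by
  have hsin : 0 < Real.sin (angle p) := by
    rw [sin_angle hp]
    have := hp.norm_fst_pos
    have := hp.norm_snd_pos
    positivity
  by_contra! h
  exact hsin.not_ge (Real.sin_nonpos_of_nonpos_of_neg_pi_le h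
    (le_trans (by linarith [pi_pos]) (angle_mem_Icc hp).1))

theorem defect_eq_angle_sub_sin (hp : IsUnimodular p) :
    defect p = angle p - Real.sin (angle p) := by
  rw [defect, sin_angle hp]

theorem defect_nonneg (hp : IsUnimodular p) : 0 ≤ defect p := by
  rw [defect_eq_angle_sub_sin hp]
  linarith [Real.sin_le (angle_pos hp).le]

theorem defect_le (hp : IsUnimodular p) : defect p ≤ angle p ^ 3 / 6 := by
  rw [defect_eq_angle_sub_sin hp]
  linarith [Real.sin_ge_sub_cube (angle_pos hp).le]

theorem summand_nonneg (hp : IsUnimodular p) : 0 ≤ summand p := by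
  have := hp.norm_fst_pos
  have := hp.norm_snd_pos
  have := norm_add_le (toComplex p.1) (toComplex p.2)
  rw [← toComplex_add] at this
  unfold summand
  apply div_nonneg <;> [linarith; positivity]

theorem summand_eq_defect_sub (hp : IsUnimodular p) :
    summand p = defect p - defect (leftChild p) - defect (rightChild p) := by
  have := hp.norm_fst_pos
  have := hp.norm_snd_pos
  have : 0 < ‖toComplex (p.1 + p.2)‖ := (isUnimodular_rightChild hp).norm_fst_pos
  simp only [summand, defect]
  rw [← angle_leftChild_add_angle_rightChild p]
  simp only [leftChild, rightChild]
  field_simp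
  ring

theorem toComplex_root : toComplex root.1 = 1 ∧ toComplex root.2 = Complex.I := by
  simp [toComplex, root, Complex.ext_iff]

theorem angle_root : angle root = π / 2 := by
  simp [angle, toComplex_root]

theorem defect_root : defect root = π / 2 - 1 := by
  simp [defect, angle_root, toComplex_root]

def level : ℕ → Finset (List Bool)
  | 0 => {[]}
  | n + 1 => (level n).biUnion fun l ↦ {false :: l, true :: l}

def below : ℕ → Finset (List Bool)
  | 0 => ∅
  | n + 1 => below n ∪ level n

theorem mem_level {n : ℕ} {l : List Bool} : l ∈ level n ↔ l.length = n := by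
  induction n generalizing l with
  | zero => simp [level]
  | succ n ih =>
    cases l with
    | nil => simp [level]
    | cons b l => cases b <;> simp [level, ih]

theorem mem_below {n : ℕ} {l : List Bool} : l ∈ below n ↔ l.length < n := by
  induction n with
  | zero => simp [below]
  | succ n ih =>
    rw [below, mem_union, ih, mem_level]
    omega

theorem below_mono : Monotone below :=
  monotone_nat_of_le_succ fun _ ↦ subset_union_left

theorem sum_level_succ {M : Type*} [AddCommMonoid M] (f : List Bool → M) (n : ℕ) :
    ∑ l ∈ level (n + 1), f l = ∑ l ∈ level n, (f (false :: l) + f (true :: l)) := by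
  rw [level, sum_biUnion]
  · exact sum_congr rfl fun l _ ↦ sum_pair (by simp)
  · intro l _ l' _ hne
    simp only [Function.onFun, disjoint_insert_left, disjoint_insert_right, disjoint_singleton,
      mem_insert, mem_singleton]
    simp [hne, hne.symm]

theorem sum_below_succ {M : Type*} [AddCommMonoid M] (f : List Bool → M) (n : ℕ) :
    ∑ l ∈ below (n + 1), f l = ∑ l ∈ below n, f l + ∑ l ∈ level n, f l := by
  refine sum_union (disjoint_left.2 fun l hl hl' ↦ ?_)
  rw [mem_below] at hl
  rw [mem_level] at hl'
  omega

theorem sum_level_angle (n : ℕ) : ∑ l ∈ level n, angle (node l) = π / 2 := by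
  induction n with
  | zero => simp [level, node, angle_root]
  | succ n ih =>
    rw [sum_level_succ, ← ih]
    exact sum_congr rfl fun l _ ↦ angle_leftChild_add_angle_rightChild _

theorem sum_below_summand (n : ℕ) :
    ∑ l ∈ below n, summand (node l) = defect root - ∑ l ∈ level n, defect (node l) := by
  induction n with
  | zero => simp [below, level, node]
  | succ n ih =>
    have hstep : ∑ l ∈ level n, summand (node l) =
        ∑ l ∈ level n, defect (node l) - ∑ l ∈ level (n + 1), defect (node l) := by
      rw [sum_level_succ, ← sum_sub_distrib]
      refine sum_congr rfl fun l _ ↦ ?_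
      rw [summand_eq_defect_sub (isUnimodular_node l), sub_sub]
      rfl
    rw [sum_below_succ, ih, hstep]
    ring

theorem length_add_one_div_four_le_norm_mul_norm (l : List Bool) :
    ((l.length : ℝ) + 1) / 4 ≤ ‖toComplex (node l).1‖ * ‖toComplex (node l).2‖ := by
  have hp := isUnimodular_node l
  refine le_trans ?_ (add_sub_one_div_four_le_norm_mul_norm hp.fst_pos hp.snd_pos)
  have := (Int.cast_le (R := ℝ)).2 (length_add_two_le l)
  push_cast at this ⊢
  linarith

theorem angle_node_le (l : List Bool) : angle (node l) ≤ 2 * π / (l.length + 1) := by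
  have hp := isUnimodular_node l
  have hsin : Real.sin (angle (node l)) ≤ 4 / (l.length + 1) := by
    rw [sin_angle hp]
    exact (one_div_le_one_div_of_le (by positivity)
      (length_add_one_div_four_le_norm_mul_norm l)).trans_eq (one_div_div _ _)
  calc angle (node l) = π / 2 * (2 / π * angle (node l)) := by field_simp
    _ ≤ π / 2 * (4 / (l.length + 1)) := by
        gcongr
        exact (Real.mul_le_sin (angle_pos hp).le (angle_le_pi_div_two hp)).trans hsin
    _ = 2 * π / (l.length + 1) := by ring

theorem sum_level_defect_le (n : ℕ) :
    ∑ l ∈ level n, defect (node l) ≤ π ^ 3 / 3 * (1 / ((n : ℝ) + 1)) ^ 2 := by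
  have hterm : ∀ l ∈ level n,
      defect (node l) ≤ angle (node l) * ((2 * π / (n + 1)) ^ 2 / 6) := by
    intro l hl
    have hp := isUnimodular_node l
    have hθ := angle_node_le l
    rw [mem_level.1 hl] at hθ
    calc defect (node l) ≤ angle (node l) * angle (node l) ^ 2 / 6 := by
          linarith [defect_le hp]
      _ ≤ angle (node l) * (2 * π / (n + 1)) ^ 2 / 6 := by
          have := (angle_pos hp).le
          gcongr
      _ = _ := by ring
  calc ∑ l ∈ level n, defect (node l)
      ≤ ∑ l ∈ level n, angle (node l) * ((2 * π / (n + 1)) ^ 2 / 6) := sum_le_sum hterm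
    _ = π ^ 3 / 3 * (1 / ((n : ℝ) + 1)) ^ 2 := by
        rw [← sum_mul, sum_level_angle]
        ring

theorem tendsto_sum_level_defect :
    Tendsto (fun n ↦ ∑ l ∈ level n, defect (node l)) atTop (𝓝 0) := by
  have hbound : Tendsto (fun n : ℕ ↦ π ^ 3 / 3 * (1 / ((n : ℝ) + 1)) ^ 2) atTop (𝓝 0) := by
    have := (tendsto_one_div_add_atTop_nhds_zero_nat.pow 2).const_mul (π ^ 3 / 3)
    rwa [zero_pow two_ne_zero, mul_zero] at this
  exact squeeze_zero (fun n ↦ sum_nonneg fun l _ ↦ defect_nonneg (isUnimodular_node l))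
    sum_level_defect_le hbound

theorem hasSum_summand_node : HasSum (fun l ↦ summand (node l)) (π / 2 - 1) := by
  refine hasSum_of_monotone_of_tendsto (fun l ↦ summand_nonneg (isUnimodular_node l)) below_mono
    (fun l ↦ ⟨l.length + 1, mem_below.2 l.length.lt_succ_self⟩) ?_
  simp_rw [sum_below_summand, defect_root]
  simpa using tendsto_const_nhds.sub tendsto_sum_level_defect

theorem hasSum_summand : HasSum (fun p : {p // IsUnimodular p} ↦ summand p) (π / 2 - 1) :=
  nodeEquiv.hasSum_iff.1 hasSum_summand_node

end SternBrocot

end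

theorem stmt7 :
    (∑' p : {p : (ℤ × ℤ) × (ℤ × ℤ) //
        0 ≤ p.1.1 ∧ 0 ≤ p.1.2 ∧ 0 ≤ p.2.1 ∧ 0 ≤ p.2.2 ∧
        p.1.1 * p.2.2 - p.1.2 * p.2.1 = 1},
      (Real.sqrt ((p.1.1.1 : ℝ) ^ 2 + (p.1.1.2 : ℝ) ^ 2)
        + Real.sqrt ((p.1.2.1 : ℝ) ^ 2 + (p.1.2.2 : ℝ) ^ 2)
        - Real.sqrt (((p.1.1.1 : ℝ) + p.1.2.1) ^ 2 + ((p.1.1.2 : ℝ) + p.1.2.2) ^ 2)) /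
      (Real.sqrt ((p.1.1.1 : ℝ) ^ 2 + (p.1.1.2 : ℝ) ^ 2)
        * Real.sqrt ((p.1.2.1 : ℝ) ^ 2 + (p.1.2.2 : ℝ) ^ 2)
        * Real.sqrt (((p.1.1.1 : ℝ) + p.1.2.1) ^ 2 + ((p.1.1.2 : ℝ) + p.1.2.2) ^ 2)))
      = Real.pi / 2 - 1 := by
  refine (tsum_congr fun p ↦ ?_).trans SternBrocot.hasSum_summand.tsum_eq
  simp only [SternBrocot.summand, SternBrocot.norm_toComplex, Prod.fst_add, Prod.snd_add,
    Int.cast_add]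
end

section
/- Let A = {(x,y) : x,y ∈ ℤ²_{≥0}, det(x,y) = 1}. Then Σ_{(x,y)∈A} (|x| + |y| - |x+y|) = 2. -/
/-!
Every pair `(x, y)` of the sum occurs exactly once in the Stern–Brocot tree rooted at
`(e₁, e₂)`, in which `(x, y)` has the children `(x, x + y)` and `(x + y, y)`. With
`ρ(x, y) = ‖x‖ + ‖y‖ - ⟪x, y⟫ / ‖x‖ - ⟪x, y⟫ / ‖y‖` (`projGap`) one has
`‖x‖ + ‖y‖ - ‖x + y‖ = ρ(x, y) - ρ(x, x + y) - ρ(x + y, y)`, so the terms on the first `n`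
levels add up to `ρ(e₁, e₂) - Rₙ = 2 - Rₙ`, where `Rₙ` is the sum of `ρ` over level `n`.

It remains to see `Rₙ → 0`. As `‖x‖²‖y‖² - ⟪x, y⟫² = det(x, y)² = 1`, we get
`ρ(x, y) ≤ (1/‖x‖ + 1/‖y‖) / (‖x‖‖y‖)`, and `1 / (‖x‖‖y‖) = sin(arg y - arg x) ≤ arg y - arg x`,
where the arcs `[arg x, arg y]` of one level tile `[0, π/2]`. Hence the nodes with
`‖x‖, ‖y‖ > K` contribute at most `π / K`. Every node on level `n` contributes at most `2 / n`,
since `⟪x, y⟫ ≥ n` there, and at most `2 (K + 1)²` nodes of a level have `‖x‖ ≤ K` or `‖y‖ ≤ K`: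
a node of a level is determined by `x`, because `(x, y + t x)` lies `t` levels below `(x, y)`,
and likewise by `y`.
-/

open Complex ComplexConjugate Filter Topology Real Finset
open scoped RealInnerProductSpace

section InnerProductSpace

variable {E : Type*} [NormedAddCommGroup E] [InnerProductSpace ℝ E]

noncomputable def projGap (x y : E) : ℝ :=
  ‖x‖ + ‖y‖ - ⟪x, y⟫ / ‖x‖ - ⟪x, y⟫ / ‖y‖

lemma projGap_nonneg (x y : E) : 0 ≤ projGap x y := by
  have hx : ⟪x, y⟫ / ‖x‖ ≤ ‖y‖ :=
    div_le_of_le_mul₀ (norm_nonneg _) (norm_nonneg _)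
      (mul_comm ‖x‖ ‖y‖ ▸ real_inner_le_norm x y)
  have hy : ⟪x, y⟫ / ‖y‖ ≤ ‖x‖ :=
    div_le_of_le_mul₀ (norm_nonneg _) (norm_nonneg _) (real_inner_le_norm x y)
  unfold projGap
  linarith

lemma norm_add_norm_sub_norm_add_eq_projGap {x y : E} (hx : x ≠ 0) (hy : y ≠ 0)
    (hxy : x + y ≠ 0) :
    ‖x‖ + ‖y‖ - ‖x + y‖ = projGap x y - projGap x (x + y) - projGap (x + y) y := by
  have h := norm_add_sq_real x y
  simp only [projGap, inner_add_right, inner_add_left, real_inner_self_eq_norm_sq]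
  field_simp
  linear_combination (‖x‖ * ‖y‖) * h

lemma projGap_le {x y : E} (hx : x ≠ 0) (hy : y ≠ 0) (hinner : 0 ≤ ⟪x, y⟫) :
    projGap x y ≤ (‖x‖⁻¹ + ‖y‖⁻¹) *
      (((‖x‖ * ‖y‖) ^ 2 - ⟪x, y⟫ ^ 2) / (‖x‖ * ‖y‖)) := by
  have hab : 0 < ‖x‖ * ‖y‖ := by positivity
  have hs : ⟪x, y⟫ ≤ ‖x‖ * ‖y‖ := real_inner_le_norm x y
  calc projGap x y = (‖x‖⁻¹ + ‖y‖⁻¹) * (‖x‖ * ‖y‖ - ⟪x, y⟫) := by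
        unfold projGap; field_simp; ring
    _ ≤ _ := by
        gcongr
        rw [le_div_iff₀ hab]
        nlinarith

end InnerProductSpace

namespace Complex

lemma sq_norm_mul_norm_sub_sq_inner (x y : ℂ) :
    (‖x‖ * ‖y‖) ^ 2 - ⟪x, y⟫ ^ 2 = (conj x * y).im ^ 2 := by
  rw [mul_pow, Complex.sq_norm, Complex.sq_norm, Complex.inner]
  simp only [normSq_apply, mul_re, mul_im, conj_re, conj_im]
  ring

lemma im_conj_mul_div_le_arg_sub {x y : ℂ} (hy : 0 ≤ y.im) (hxy : 0 < (conj x * y).im) :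
    (conj x * y).im / (‖x‖ * ‖y‖) ≤ arg y - arg x := by
  have hx0 : x ≠ 0 := by rintro rfl; simp at hxy
  have hy0 : y ≠ 0 := by rintro rfl; simp at hxy
  have hsin : Real.sin (arg y - arg x) = (conj x * y).im / (‖x‖ * ‖y‖) := by
    rw [Real.sin_sub, sin_arg, sin_arg, cos_arg hx0, cos_arg hy0]
    simp only [mul_im, conj_re, conj_im]
    field_simp
    ring
  have hpos : 0 < arg y - arg x := by
    by_contra! h
    have := Real.sin_nonpos_of_nonpos_of_neg_pi_le h
      (by linarith [arg_nonneg_iff.2 hy, arg_le_pi x])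
    have : 0 < (conj x * y).im / (‖x‖ * ‖y‖) := by positivity
    linarith
  exact hsin ▸ Real.sin_le hpos.le

end Complex

/-- Lattice vectors are read in `ℂ`, which supplies the Euclidean norm, the inner product and
the angle `arg` together. -/
def toComplex (v : ℤ × ℤ) : ℂ := ⟨v.1, v.2⟩

@[simp] lemma toComplex_re (v : ℤ × ℤ) : (toComplex v).re = v.1 := rfl
@[simp] lemma toComplex_im (v : ℤ × ℤ) : (toComplex v).im = v.2 := rfl

@[simp] lemma toComplex_add (u v : ℤ × ℤ) : toComplex (u + v) = toComplex u + toComplex v := by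
  apply Complex.ext <;> simp

@[simp] lemma toComplex_one_zero : toComplex (1, 0) = 1 := Complex.ext (by simp) (by simp)

@[simp] lemma toComplex_zero_one : toComplex (0, 1) = I := Complex.ext (by simp) (by simp)

lemma norm_toComplex (v : ℤ × ℤ) :
    ‖toComplex v‖ = √((v.1 : ℝ) ^ 2 + (v.2 : ℝ) ^ 2) := by
  rw [Complex.norm_def, normSq_apply, toComplex_re, toComplex_im, sq, sq]

lemma one_le_norm_toComplex {v : ℤ × ℤ} (hv : v ≠ 0) : 1 ≤ ‖toComplex v‖ := by
  have h : (1 : ℤ) ≤ v.1 ^ 2 + v.2 ^ 2 := by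
    rcases v with ⟨a, b⟩
    have : a ≠ 0 ∨ b ≠ 0 := by
      by_contra! h
      exact hv (by simp [h])
    rcases this with h | h <;> nlinarith [sq_pos_of_ne_zero h, sq_nonneg a, sq_nonneg b]
  rw [norm_toComplex, Real.one_le_sqrt]
  exact_mod_cast h

lemma toComplex_ne_zero {v : ℤ × ℤ} (hv : v ≠ 0) : toComplex v ≠ 0 :=
  norm_pos_iff.1 (by linarith [one_le_norm_toComplex hv])

def det (u v : ℤ × ℤ) : ℤ := u.1 * v.2 - u.2 * v.1

lemma im_conj_toComplex_mul_toComplex (u v : ℤ × ℤ) :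
    (conj (toComplex u) * toComplex v).im = det u v := by
  simp only [mul_im, conj_re, conj_im, toComplex_re, toComplex_im, det, Int.cast_sub, Int.cast_mul]
  ring

lemma det_add_self_right (u v : ℤ × ℤ) : det u (u + v) = det u v := by
  simp only [det, Prod.fst_add, Prod.snd_add]; ring

lemma det_add_self_left (u v : ℤ × ℤ) : det (u + v) v = det u v := by
  simp only [det, Prod.fst_add, Prod.snd_add]; ring

lemma exists_eq_add_zsmul_of_det_left {u v v' : ℤ × ℤ} (h : det u v = 1) (h' : det u v' = 1) :
    ∃ t : ℤ, v' = v + t • u :=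
  ⟨det v' v, by
    simp only [det] at h h' ⊢
    ext <;> simp only [Prod.fst_add, Prod.snd_add, Prod.smul_fst, Prod.smul_snd, smul_eq_mul]
    · linear_combination -v'.1 * h + v.1 * h'
    · linear_combination -v'.2 * h + v.2 * h'⟩

lemma exists_eq_add_zsmul_of_det_right {u u' v : ℤ × ℤ} (h : det u v = 1) (h' : det u' v = 1) :
    ∃ t : ℤ, u' = u + t • v :=
  ⟨det u u', by
    simp only [det] at h h' ⊢
    ext <;> simp only [Prod.fst_add, Prod.snd_add, Prod.smul_fst, Prod.smul_snd, smul_eq_mul]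
    · linear_combination -u'.1 * h + u.1 * h'
    · linear_combination -u'.2 * h + u.2 * h'⟩

def IsPosBasis (p : (ℤ × ℤ) × (ℤ × ℤ)) : Prop :=
  0 ≤ p.1 ∧ 0 ≤ p.2 ∧ det p.1 p.2 = 1

section Tree

variable {α : Type*} [Add α]

def leftChild (p : α × α) : α × α := (p.1, p.1 + p.2)

def rightChild (p : α × α) : α × α := (p.1 + p.2, p.2)

lemma leftChild_injective [IsLeftCancelAdd α] :
    Function.Injective (leftChild : α × α → α × α) := by
  rintro ⟨a, b⟩ ⟨c, d⟩ h
  simp only [leftChild, Prod.mk.injEq] at h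
  obtain ⟨rfl, h⟩ := h
  rw [add_left_cancel h]

lemma rightChild_injective [IsRightCancelAdd α] :
    Function.Injective (rightChild : α × α → α × α) := by
  rintro ⟨a, b⟩ ⟨c, d⟩ h
  simp only [rightChild, Prod.mk.injEq] at h
  obtain ⟨h, rfl⟩ := h
  rw [add_right_cancel h]

end Tree

def sternBrocot : List Bool → (ℤ × ℤ) × (ℤ × ℤ)
  | [] => ((1, 0), (0, 1))
  | true :: w => leftChild (sternBrocot w)
  | false :: w => rightChild (sternBrocot w)

lemma isPosBasis_leftChild {p : (ℤ × ℤ) × (ℤ × ℤ)} (hp : IsPosBasis p) :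
    IsPosBasis (leftChild p) :=
  ⟨hp.1, add_nonneg hp.1 hp.2.1, (det_add_self_right _ _).trans hp.2.2⟩

lemma isPosBasis_rightChild {p : (ℤ × ℤ) × (ℤ × ℤ)} (hp : IsPosBasis p) :
    IsPosBasis (rightChild p) :=
  ⟨add_nonneg hp.1 hp.2.1, hp.2.1, (det_add_self_left _ _).trans hp.2.2⟩

lemma isPosBasis_sternBrocot : ∀ w, IsPosBasis (sternBrocot w)
  | [] => ⟨by decide, by decide, rfl⟩
  | true :: w => isPosBasis_leftChild (isPosBasis_sternBrocot w)
  | false :: w => isPosBasis_rightChild (isPosBasis_sternBrocot w)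

namespace IsPosBasis

variable {p q : (ℤ × ℤ) × (ℤ × ℤ)}

lemma fst_ne_zero (hp : IsPosBasis p) : p.1 ≠ 0 := by
  intro h; simpa [det, h] using hp.2.2

lemma snd_ne_zero (hp : IsPosBasis p) : p.2 ≠ 0 := by
  intro h; simpa [det, h] using hp.2.2

lemma one_le_fst_add (hp : IsPosBasis p) : 1 ≤ p.1.1 + p.1.2 := by
  obtain ⟨⟨h1, h2⟩, ⟨h3, h4⟩, h⟩ := hp
  simp only [det, Prod.fst_zero, Prod.snd_zero] at *
  nlinarith

lemma one_le_snd_add (hp : IsPosBasis p) : 1 ≤ p.2.1 + p.2.2 := by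
  obtain ⟨⟨h1, h2⟩, ⟨h3, h4⟩, h⟩ := hp
  simp only [det, Prod.fst_zero, Prod.snd_zero] at *
  nlinarith

lemma leftChild_ne_rightChild (hp : IsPosBasis p) (hq : IsPosBasis q) :
    leftChild p ≠ rightChild q := by
  intro h
  simp only [leftChild, rightChild, Prod.mk.injEq] at h
  have h0 : q.1 + p.2 = 0 :=
    calc q.1 + p.2 = (p.1 + p.2) - q.2 := by rw [h.1]; abel
      _ = 0 := by rw [h.2, sub_self]
  exact hp.snd_ne_zero ((add_eq_zero_iff_of_nonneg hq.1 hp.2.1).1 h0).2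

lemma leftChild_ne_root (hp : IsPosBasis p) : leftChild p ≠ ((1, 0), (0, 1)) := by
  intro h
  have h1 : p.2.1 = -1 := by
    simpa [leftChild] using congrArg (fun p => p.2.1 - p.1.1) h
  exact absurd hp.2.1.1 (by simp [h1])

lemma rightChild_ne_root (hp : IsPosBasis p) : rightChild p ≠ ((1, 0), (0, 1)) := by
  intro h
  have h1 : p.1.2 = -1 := by
    simpa [rightChild] using congrArg (fun p => p.1.2 - p.2.2) h
  exact absurd hp.1.2 (by simp [h1])

lemma eq_root_or_le_or_le (hp : IsPosBasis p) :
    p = ((1, 0), (0, 1)) ∨ p.1 ≤ p.2 ∨ p.2 ≤ p.1 := by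
  obtain ⟨⟨a, b⟩, c, d⟩ := p
  obtain ⟨⟨ha, hb⟩, ⟨hc, hd⟩, h⟩ := hp
  simp only [det, Prod.fst_zero, Prod.snd_zero, Prod.mk_le_mk, Prod.mk.injEq] at *
  rcases le_total a c with hac | hac <;> rcases le_total b d with hbd | hbd
  · exact .inr (.inl ⟨hac, hbd⟩)
  · nlinarith [mul_le_mul hac hbd hd hc]
  · rcases hac.eq_or_lt with rfl | hac
    · exact .inr (.inl ⟨le_rfl, hbd⟩)
    rcases hbd.eq_or_lt with rfl | hbd
    · exact .inr (.inr ⟨hac.le, le_rfl⟩)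
    have : b = 0 ∧ c = 0 := by constructor <;> nlinarith [mul_le_mul hac hbd (by omega) ha]
    obtain ⟨rfl, rfl⟩ := this
    have : a = 1 ∧ d = 1 := by constructor <;> nlinarith
    exact .inl ⟨⟨this.1, rfl⟩, rfl, this.2⟩
  · exact .inr (.inr ⟨hac, hbd⟩)

end IsPosBasis

lemma sternBrocot_cons_ne_nil (b : Bool) (w : List Bool) :
    sternBrocot (b :: w) ≠ sternBrocot [] := by
  cases b
  · exact (isPosBasis_sternBrocot w).rightChild_ne_root
  · exact (isPosBasis_sternBrocot w).leftChild_ne_root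

lemma sternBrocot_injective : Function.Injective sternBrocot := by
  intro w w' h
  induction w generalizing w' with
  | nil =>
    cases w' with
    | nil => rfl
    | cons b w' => exact absurd h.symm (sternBrocot_cons_ne_nil b w')
  | cons b w ih =>
    cases w' with
    | nil => exact absurd h (sternBrocot_cons_ne_nil b w)
    | cons b' w' =>
      have hw := isPosBasis_sternBrocot w
      have hw' := isPosBasis_sternBrocot w'
      cases b <;> cases b' <;> simp only [sternBrocot] at h
      · rw [ih (rightChild_injective h)]
      · exact absurd h.symm (hw'.leftChild_ne_rightChild hw)
      · exact absurd h (hw.leftChild_ne_rightChild hw')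
      · rw [ih (leftChild_injective h)]

lemma exists_sternBrocot_eq {p : (ℤ × ℤ) × (ℤ × ℤ)} (hp : IsPosBasis p) :
    ∃ w, sternBrocot w = p := by
  induction hn : (p.1.1 + p.1.2 + p.2.1 + p.2.2).toNat using Nat.strong_induction_on
    generalizing p with
  | _ n ih =>
    have h1 := hp.one_le_fst_add
    have h2 := hp.one_le_snd_add
    rcases hp.eq_root_or_le_or_le with rfl | hle | hle
    · exact ⟨[], rfl⟩
    · have hq : IsPosBasis (p.1, p.2 - p.1) :=
        ⟨hp.1, sub_nonneg.2 hle, by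
          have := hp.2.2; simp only [det, Prod.fst_sub, Prod.snd_sub] at this ⊢
          linear_combination this⟩
      obtain ⟨w, hw⟩ := ih _ (by simp only [Prod.fst_sub, Prod.snd_sub]; omega) hq rfl
      exact ⟨true :: w, by simp [sternBrocot, hw, leftChild]⟩
    · have hq : IsPosBasis (p.1 - p.2, p.2) :=
        ⟨sub_nonneg.2 hle, hp.2.1, by
          have := hp.2.2; simp only [det, Prod.fst_sub, Prod.snd_sub] at this ⊢
          linear_combination this⟩
      obtain ⟨w, hw⟩ := ih _ (by simp only [Prod.fst_sub, Prod.snd_sub]; omega) hq rfl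
      exact ⟨false :: w, by simp [sternBrocot, hw, rightChild]⟩

lemma sternBrocot_replicate_true_append (n : ℕ) (w : List Bool) :
    sternBrocot (List.replicate n true ++ w) =
      ((sternBrocot w).1, (sternBrocot w).2 + n • (sternBrocot w).1) := by
  induction n with
  | zero => simp
  | succ n ih =>
    rw [List.replicate_succ, List.cons_append, sternBrocot, ih, leftChild, succ_nsmul]
    congr 1
    dsimp only
    ac_rfl

lemma sternBrocot_replicate_false_append (n : ℕ) (w : List Bool) :
    sternBrocot (List.replicate n false ++ w) =
      ((sternBrocot w).1 + n • (sternBrocot w).2, (sternBrocot w).2) := by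
  induction n with
  | zero => simp
  | succ n ih =>
    rw [List.replicate_succ, List.cons_append, sternBrocot, ih, rightChild, succ_nsmul]
    congr 1
    dsimp only
    ac_rfl

lemma eq_of_length_eq_of_replicate_append_eq {w w' : List Bool} {b : Bool} {n : ℕ}
    (hl : w.length = w'.length) (h : w' = List.replicate n b ++ w) : w' = w := by
  obtain rfl : n = 0 := by simpa [h] using hl
  simpa using h

lemma eq_of_length_eq_of_fst_eq {w w' : List Bool} (hl : w.length = w'.length)
    (h : (sternBrocot w).1 = (sternBrocot w').1) : w = w' := by
  obtain ⟨t, ht⟩ := exists_eq_add_zsmul_of_det_left (isPosBasis_sternBrocot w).2.2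
    (h ▸ (isPosBasis_sternBrocot w').2.2)
  obtain ⟨n, rfl | rfl⟩ := t.eq_nat_or_neg
  · refine (eq_of_length_eq_of_replicate_append_eq hl (b := true) (n := n)
      (sternBrocot_injective ?_)).symm
    rw [sternBrocot_replicate_true_append, ← natCast_zsmul, ← ht, h]
  · refine eq_of_length_eq_of_replicate_append_eq hl.symm (b := true) (n := n)
      (sternBrocot_injective ?_)
    rw [sternBrocot_replicate_true_append, ← h, ht, neg_smul, natCast_zsmul,
      neg_add_cancel_right]

lemma eq_of_length_eq_of_snd_eq {w w' : List Bool} (hl : w.length = w'.length)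
    (h : (sternBrocot w).2 = (sternBrocot w').2) : w = w' := by
  obtain ⟨t, ht⟩ := exists_eq_add_zsmul_of_det_right (isPosBasis_sternBrocot w).2.2
    (h ▸ (isPosBasis_sternBrocot w').2.2)
  obtain ⟨n, rfl | rfl⟩ := t.eq_nat_or_neg
  · refine (eq_of_length_eq_of_replicate_append_eq hl (b := false) (n := n)
      (sternBrocot_injective ?_)).symm
    rw [sternBrocot_replicate_false_append, ← natCast_zsmul, ← ht, h]
  · refine eq_of_length_eq_of_replicate_append_eq hl.symm (b := false) (n := n)
      (sternBrocot_injective ?_)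
    rw [sternBrocot_replicate_false_append, ← h, ht, neg_smul, natCast_zsmul,
      neg_add_cancel_right]

noncomputable def levelSum (F : (ℤ × ℤ) × (ℤ × ℤ) → ℝ) (n : ℕ) : ℝ :=
  ∑ v : Fin n → Bool, F (sternBrocot (List.ofFn v))

lemma levelSum_zero (F : (ℤ × ℤ) × (ℤ × ℤ) → ℝ) :
    levelSum F 0 = F ((1, 0), (0, 1)) := by
  simp [levelSum, sternBrocot]

lemma levelSum_succ (F : (ℤ × ℤ) × (ℤ × ℤ) → ℝ) (n : ℕ) :
    levelSum F (n + 1) = levelSum (fun p => F (leftChild p) + F (rightChild p)) n := by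
  rw [levelSum, ← (Fin.consEquiv fun _ => Bool).sum_comp, Fintype.sum_prod_type,
    Fintype.sum_bool, levelSum, ← sum_add_distrib]
  simp [Fin.consEquiv, List.ofFn_succ, sternBrocot]

noncomputable def normDefect (p : (ℤ × ℤ) × (ℤ × ℤ)) : ℝ :=
  ‖toComplex p.1‖ + ‖toComplex p.2‖ - ‖toComplex (p.1 + p.2)‖

noncomputable def pairProjGap (p : (ℤ × ℤ) × (ℤ × ℤ)) : ℝ :=
  projGap (toComplex p.1) (toComplex p.2)

noncomputable def argWidth (p : (ℤ × ℤ) × (ℤ × ℤ)) : ℝ :=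
  arg (toComplex p.2) - arg (toComplex p.1)

lemma normDefect_nonneg (p : (ℤ × ℤ) × (ℤ × ℤ)) : 0 ≤ normDefect p := by
  rw [normDefect, toComplex_add]
  linarith [norm_add_le (toComplex p.1) (toComplex p.2)]

namespace IsPosBasis

variable {p : (ℤ × ℤ) × (ℤ × ℤ)}

lemma one_le_norm_fst (hp : IsPosBasis p) : 1 ≤ ‖toComplex p.1‖ :=
  one_le_norm_toComplex hp.fst_ne_zero

lemma one_le_norm_snd (hp : IsPosBasis p) : 1 ≤ ‖toComplex p.2‖ :=
  one_le_norm_toComplex hp.snd_ne_zero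

lemma inner_nonneg (hp : IsPosBasis p) : 0 ≤ ⟪toComplex p.1, toComplex p.2⟫ := by
  obtain ⟨⟨h1, h2⟩, ⟨h3, h4⟩, -⟩ := hp
  simp only [Prod.fst_zero, Prod.snd_zero] at *
  simp only [Complex.inner, mul_re, conj_re, conj_im, toComplex_re, toComplex_im]
  have : (0 : ℝ) ≤ p.1.1 * p.2.1 + p.1.2 * p.2.2 := by positivity
  linarith

lemma im_conj_mul (hp : IsPosBasis p) : (conj (toComplex p.1) * toComplex p.2).im = 1 := by
  rw [im_conj_toComplex_mul_toComplex, hp.2.2, Int.cast_one]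

lemma normDefect_eq (hp : IsPosBasis p) :
    normDefect p = pairProjGap p - pairProjGap (leftChild p) - pairProjGap (rightChild p) := by
  have hsum := toComplex_ne_zero (isPosBasis_leftChild hp).snd_ne_zero
  rw [leftChild, toComplex_add] at hsum
  simpa [normDefect, pairProjGap, leftChild, rightChild] using
    norm_add_norm_sub_norm_add_eq_projGap (toComplex_ne_zero hp.fst_ne_zero)
      (toComplex_ne_zero hp.snd_ne_zero) hsum

lemma pairProjGap_le (hp : IsPosBasis p) :
    pairProjGap p ≤
      (‖toComplex p.1‖⁻¹ + ‖toComplex p.2‖⁻¹) /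
        (‖toComplex p.1‖ * ‖toComplex p.2‖) := by
  have h := projGap_le (toComplex_ne_zero hp.fst_ne_zero) (toComplex_ne_zero hp.snd_ne_zero)
    hp.inner_nonneg
  rwa [Complex.sq_norm_mul_norm_sub_sq_inner, hp.im_conj_mul, one_pow,
    ← div_eq_mul_one_div] at h

lemma inv_le_argWidth (hp : IsPosBasis p) :
    (‖toComplex p.1‖ * ‖toComplex p.2‖)⁻¹ ≤ argWidth p := by
  have h := Complex.im_conj_mul_div_le_arg_sub (x := toComplex p.1) (y := toComplex p.2)
    (by simpa using hp.2.1.2) (by rw [hp.im_conj_mul]; exact one_pos)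
  rwa [hp.im_conj_mul, one_div] at h

lemma argWidth_nonneg (hp : IsPosBasis p) : 0 ≤ argWidth p :=
  (inv_nonneg.2 (by positivity)).trans hp.inv_le_argWidth

lemma pairProjGap_le_two_div (hp : IsPosBasis p) {r : ℝ} (hr : 0 < r)
    (hrs : r ≤ ⟪toComplex p.1, toComplex p.2⟫) :
    pairProjGap p ≤ 2 / r := by
  have ha := hp.one_le_norm_fst
  have hb := hp.one_le_norm_snd
  have hrab : r ≤ ‖toComplex p.1‖ * ‖toComplex p.2‖ := hrs.trans (real_inner_le_norm _ _)
  calc pairProjGap p ≤ _ := hp.pairProjGap_le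
    _ ≤ (1 + 1) / r := by gcongr <;> exact inv_le_one_of_one_le₀ ‹_›
    _ = 2 / r := by norm_num

lemma pairProjGap_le_of_lt_norm (hp : IsPosBasis p) {K : ℝ} (hK : 0 < K)
    (ha : K < ‖toComplex p.1‖) (hb : K < ‖toComplex p.2‖) :
    pairProjGap p ≤ 2 / K * argWidth p := by
  calc pairProjGap p ≤ _ := hp.pairProjGap_le
    _ ≤ (K⁻¹ + K⁻¹) * argWidth p := by
        rw [div_eq_mul_inv]
        gcongr
        exact hp.inv_le_argWidth
    _ = 2 / K * argWidth p := by ring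

end IsPosBasis

lemma natCast_length_le_inner (w : List Bool) :
    (w.length : ℝ) ≤ ⟪toComplex (sternBrocot w).1, toComplex (sternBrocot w).2⟫ := by
  induction w with
  | nil => simp [sternBrocot, toComplex, Complex.inner]
  | cons b w ih =>
    have hp := isPosBasis_sternBrocot w
    cases b
    · have := hp.one_le_norm_snd
      simp only [sternBrocot, rightChild, toComplex_add, inner_add_left,
        real_inner_self_eq_norm_sq, List.length_cons, Nat.cast_succ]
      nlinarith
    · have := hp.one_le_norm_fst
      simp only [sternBrocot, leftChild, toComplex_add, inner_add_right,
        real_inner_self_eq_norm_sq, List.length_cons, Nat.cast_succ]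
      nlinarith

lemma levelSum_argWidth (n : ℕ) : levelSum argWidth n = π / 2 := by
  induction n with
  | zero => simp [levelSum_zero, argWidth]
  | succ n ih =>
    rw [levelSum_succ, ← ih]
    congr 1
    funext p
    simp only [argWidth, leftChild, rightChild]
    ring

lemma card_filter_norm_toComplex_le {g : (ℤ × ℤ) × (ℤ × ℤ) → ℤ × ℤ}
    (hg : ∀ w, 0 ≤ g (sternBrocot w))
    (hinj : ∀ w w' : List Bool, w.length = w'.length →
      g (sternBrocot w) = g (sternBrocot w') → w = w') (n K : ℕ) :
    #{v : Fin n → Bool | ‖toComplex (g (sternBrocot (List.ofFn v)))‖ ≤ K} ≤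
      (K + 1) ^ 2 := by
  calc _ ≤ #(Icc (0 : ℤ × ℤ) (K, K)) := by
        refine card_le_card_of_injOn (fun v => g (sternBrocot (List.ofFn v))) ?_ ?_
        · intro v hv
          rw [mem_coe, mem_filter] at hv
          have h1 := (le_abs_self _).trans ((abs_re_le_norm _).trans hv.2)
          have h2 := (le_abs_self _).trans ((abs_im_le_norm _).trans hv.2)
          simp only [toComplex_re, toComplex_im] at h1 h2
          exact mem_Icc.2 ⟨hg _, by exact_mod_cast h1, by exact_mod_cast h2⟩
        · intro v _ v' _ h
          exact List.ofFn_injective (hinj _ _ (by simp) h)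
    _ = (K + 1) ^ 2 := by
        rw [card_Icc_prod, Int.card_Icc, Int.card_Icc]
        simp [sq]

lemma levelSum_pairProjGap_le {n K : ℕ} (hn : 0 < n) (hK : 0 < K) :
    levelSum pairProjGap n ≤ 4 * (K + 1) ^ 2 / n + π / K := by
  set node : (Fin n → Bool) → (ℤ × ℤ) × (ℤ × ℤ) := fun v => sternBrocot (List.ofFn v)
  set small : Finset (Fin n → Bool) :=
    {v | ‖toComplex (node v).1‖ ≤ K ∨ ‖toComplex (node v).2‖ ≤ K}
  have hcard : (#small : ℝ) ≤ 2 * (K + 1) ^ 2 := by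
    have h := (card_union_le _ _).trans (add_le_add
      (card_filter_norm_toComplex_le (g := Prod.fst) (fun w => (isPosBasis_sternBrocot w).1)
        (fun _ _ => eq_of_length_eq_of_fst_eq) n K)
      (card_filter_norm_toComplex_le (g := Prod.snd) (fun w => (isPosBasis_sternBrocot w).2.1)
        (fun _ _ => eq_of_length_eq_of_snd_eq) n K))
    rw [← filter_or] at h
    exact_mod_cast h.trans_eq (two_mul _).symm
  have hnode (v : Fin n → Bool) : pairProjGap (node v) ≤
      (if v ∈ small then (2 : ℝ) / n else 0) + 2 / K * argWidth (node v) := by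
    have hp := isPosBasis_sternBrocot (List.ofFn v)
    split_ifs with hv
    · have h := hp.pairProjGap_le_two_div (Nat.cast_pos.2 hn)
        (by simpa using natCast_length_le_inner (List.ofFn v))
      have : 0 ≤ 2 / (K : ℝ) * argWidth (node v) :=
        mul_nonneg (by positivity) hp.argWidth_nonneg
      linarith
    · simp only [small, mem_filter, mem_univ, true_and, not_or, not_le] at hv
      rw [zero_add]
      exact hp.pairProjGap_le_of_lt_norm (by positivity) hv.1 hv.2
  calc levelSum pairProjGap n
      ≤ ∑ v, ((if v ∈ small then (2 : ℝ) / n else 0) + 2 / K * argWidth (node v)) :=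
        sum_le_sum fun v _ => hnode v
    _ = #small * (2 / n) + 2 / K * (π / 2) := by
        rw [sum_add_distrib, ← mul_sum, ← levelSum, levelSum_argWidth, sum_ite_mem, univ_inter,
          sum_const, nsmul_eq_mul]
    _ ≤ 2 * (K + 1) ^ 2 * (2 / n) + 2 / K * (π / 2) := by gcongr
    _ = 4 * (K + 1) ^ 2 / n + π / K := by ring

lemma tendsto_levelSum_pairProjGap : Tendsto (levelSum pairProjGap) atTop (𝓝 0) := by
  refine tendsto_order.2 ⟨fun a ha => Eventually.of_forall fun n =>
    ha.trans_le (sum_nonneg fun _ _ => projGap_nonneg _ _), fun ε hε => ?_⟩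
  obtain ⟨K, hK⟩ := exists_nat_gt (2 * π / ε)
  have hK0 : (0 : ℝ) < K := (by positivity : 0 < 2 * π / ε).trans hK
  have hπK : π / K < ε / 2 := by
    rw [div_lt_iff₀ hε] at hK
    rw [div_lt_iff₀ hK0]
    linarith
  filter_upwards [(tendsto_const_div_atTop_nhds_zero_nat (4 * (K + 1) ^ 2 : ℝ)).eventually
    (gt_mem_nhds (half_pos hε)), eventually_gt_atTop 0] with n hn hn0
  linarith [levelSum_pairProjGap_le hn0 (Nat.cast_pos.1 hK0)]

lemma levelSum_pairProjGap_eq (n : ℕ) :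
    levelSum pairProjGap n = levelSum normDefect n + levelSum pairProjGap (n + 1) := by
  rw [levelSum_succ, levelSum, levelSum, levelSum, ← sum_add_distrib]
  exact sum_congr rfl fun v _ => by
    linarith [(isPosBasis_sternBrocot (List.ofFn v)).normDefect_eq]

lemma sum_range_levelSum_normDefect (n : ℕ) :
    ∑ k ∈ range n, levelSum normDefect k = 2 - levelSum pairProjGap n := by
  induction n with
  | zero => norm_num [levelSum_zero, pairProjGap, projGap]
  | succ n ih =>
    rw [sum_range_succ, ih, levelSum_pairProjGap_eq n]
    ring

lemma hasSum_levelSum_normDefect : HasSum (levelSum normDefect) 2 := by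
  refine (hasSum_iff_tendsto_nat_of_nonneg (f := levelSum normDefect)
    (fun n => sum_nonneg fun _ _ => normDefect_nonneg _) 2).2 ?_
  rw [funext sum_range_levelSum_normDefect]
  simpa using tendsto_levelSum_pairProjGap.const_sub 2

noncomputable def sternBrocotEquiv : List Bool ≃ {p // IsPosBasis p} :=
  Equiv.ofBijective (fun w => ⟨sternBrocot w, isPosBasis_sternBrocot w⟩)
    ⟨fun _ _ h => sternBrocot_injective (congrArg Subtype.val h),
     fun p => (exists_sternBrocot_eq p.2).imp fun _ hw => Subtype.ext hw⟩

lemma hasSum_normDefect : HasSum (fun p : {p // IsPosBasis p} => normDefect p) 2 := by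
  let e := List.equivSigmaTuple.symm.trans sternBrocotEquiv
  rw [← e.hasSum_iff]
  have hs : Summable (fun x => normDefect (e x)) :=
    (summable_sigma_of_nonneg fun _ => normDefect_nonneg _).2
      ⟨fun _ => .of_finite, by
        simp only [tsum_fintype]
        exact hasSum_levelSum_normDefect.summable⟩
  have h := hs.hasSum
  rwa [(h.sigma fun n => hasSum_fintype _).unique hasSum_levelSum_normDefect] at h

lemma isPosBasis_iff {p : (ℤ × ℤ) × (ℤ × ℤ)} :
    IsPosBasis p ↔ 0 ≤ p.1.1 ∧ 0 ≤ p.1.2 ∧ 0 ≤ p.2.1 ∧ 0 ≤ p.2.2 ∧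
      p.1.1 * p.2.2 - p.1.2 * p.2.1 = 1 := by
  simp only [IsPosBasis, Prod.le_def, det, Prod.fst_zero, Prod.snd_zero, and_assoc]

theorem stmt8 :
    (∑' p : {p : (ℤ × ℤ) × (ℤ × ℤ) //
        0 ≤ p.1.1 ∧ 0 ≤ p.1.2 ∧ 0 ≤ p.2.1 ∧ 0 ≤ p.2.2 ∧
        p.1.1 * p.2.2 - p.1.2 * p.2.1 = 1},
      (Real.sqrt ((p.1.1.1 : ℝ) ^ 2 + (p.1.1.2 : ℝ) ^ 2)
        + Real.sqrt ((p.1.2.1 : ℝ) ^ 2 + (p.1.2.2 : ℝ) ^ 2)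
        - Real.sqrt (((p.1.1.1 : ℝ) + p.1.2.1) ^ 2 + ((p.1.1.2 : ℝ) + p.1.2.2) ^ 2)))
      = 2 := by
  rw [← hasSum_normDefect.tsum_eq,
    ← (Equiv.subtypeEquivRight fun p => isPosBasis_iff.symm).tsum_eq]
  refine tsum_congr fun p => ?_
  simp only [Equiv.subtypeEquivRight_apply_coe, normDefect, norm_toComplex, Prod.fst_add,
    Prod.snd_add, Int.cast_add]
end
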